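/- arXiv:2105.07534 — 7 statements merged into one kernel-verified Lean document; each statement's English description precedes it below -/
import Mathlib

section
/- Let α ∈ [0,1] and let μ be a finite positive Borel measure on ℝ that is uniformly α-Hölder continuous. Then there exists a constant C > 0 such that for every t > 0, W_μ(t) < C·t^(−α). -/
open MeasureTheory Filter Set Metric
open scoped ENNReal Topology Classical

noncomputable section

/-- `μ` is uniformly `α`-Hölder continuous: there is `C > 0` with
`μ(I) < C |I|^α` for every (nondegenerate) interval `I` with `|I| < 1`. -/
def UnifHolder (μ : Measure ℝ) (α : ℝ) : Prop :=
  ∃ C > (0 : ℝ), ∀ a b : ℝ, a < b → b - a < 1 →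
    μ (Set.Icc a b) < ENNReal.ofReal (C * (b - a) ^ α)

/-- The Fourier transform `μ̂(s) = ∫ e^{-isx} dμ(x)` of a finite Borel measure on `ℝ`. -/
def measureFT (μ : Measure ℝ) (s : ℝ) : ℂ :=
  ∫ x : ℝ, Complex.exp (-(s * x) * Complex.I) ∂μ

/-- The time-average quantum return probability
`W_μ(t) = (1/t) ∫_0^t |μ̂(s)|² ds`. -/
def Wavg (μ : Measure ℝ) (t : ℝ) : ℝ :=
  (1 / t) * ∫ s in Set.Ioc (0 : ℝ) t, ‖measureFT μ s‖ ^ 2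

/-- `μ` is the spectral measure of the pair `(T, ψ)`: it is finite, vanishes outside
the spectrum of `T`, and `∫ f dμ = ⟨ψ, f(T)ψ⟩` for every continuous `f : ℝ → ℝ`,
where `f(T)` is given by the continuous functional calculus. -/
def IsSpectralMeasure {H : Type*} [NormedAddCommGroup H] [InnerProductSpace ℂ H]
    [CompleteSpace H] (T : H →L[ℂ] H) (ψ : H) (μ : Measure ℝ) : Prop :=
  IsFiniteMeasure μ ∧ μ {x : ℝ | (x : ℂ) ∉ spectrum ℂ T} = 0 ∧
    ∀ f : C(ℝ, ℝ), ∫ x, f x ∂μ = (inner ℂ ψ ((cfc (f : ℝ → ℝ) T) ψ) : ℂ).re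

/-- The real part of the spectrum of a bounded operator. -/
def realSpectrum {H : Type*} [NormedAddCommGroup H] [InnerProductSpace ℂ H]
    [CompleteSpace H] (T : H →L[ℂ] H) : Set ℝ :=
  {x : ℝ | (x : ℂ) ∈ spectrum ℂ T}

/-- `μ` is `α`-Hausdorff continuous: `μ(Λ) = 0` for every Borel set `Λ` with
`h^α(Λ) = 0`. -/
def HausdorffCont (μ : Measure ℝ) (α : ℝ) : Prop :=
  ∀ Λ : Set ℝ, MeasurableSet Λ → μH[α] Λ = 0 → μ Λ = 0

/-- The lower pointwise scaling exponent `d⁻_μ(x)`, with value `∞` when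
`μ(B(x;ε)) = 0` for some `ε > 0`. -/
def dLow (μ : Measure ℝ) (x : ℝ) : EReal :=
  if ∃ ε > (0 : ℝ), μ (Metric.ball x ε) = 0 then ⊤
  else Filter.liminf
    (fun ε : ℝ => ((Real.log (μ (Metric.ball x ε)).toReal / Real.log ε : ℝ) : EReal))
    (𝓝[>] (0 : ℝ))

/-- The upper pointwise scaling exponent `d⁺_μ(x)`, with value `∞` when
`μ(B(x;ε)) = 0` for some `ε > 0`. -/
def dUp (μ : Measure ℝ) (x : ℝ) : EReal :=
  if ∃ ε > (0 : ℝ), μ (Metric.ball x ε) = 0 then ⊤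
  else Filter.limsup
    (fun ε : ℝ => ((Real.log (μ (Metric.ball x ε)).toReal / Real.log ε : ℝ) : EReal))
    (𝓝[>] (0 : ℝ))

/-- The lower correlation dimension `D⁻_μ(2)`. -/
def DLow2 (μ : Measure ℝ) : EReal :=
  Filter.liminf
    (fun ε : ℝ =>
      ((Real.log (∫ x, (μ (Metric.ball x ε)).toReal ∂μ) / Real.log ε : ℝ) : EReal))
    (𝓝[>] (0 : ℝ))

/-- The upper correlation dimension `D⁺_μ(2)`. -/
def DUp2 (μ : Measure ℝ) : EReal :=
  Filter.limsup
    (fun ε : ℝ =>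
      ((Real.log (∫ x, (μ (Metric.ball x ε)).toReal ∂μ) / Real.log ε : ℝ) : EReal))
    (𝓝[>] (0 : ℝ))

/-- A set is generic (residual / comeagre in the Baire sense used in the paper)
if it contains a dense `G_δ` set. -/
def Generic {X : Type*} [TopologicalSpace X] (A : Set X) : Prop :=
  ∃ S : Set X, S ⊆ A ∧ IsGδ S ∧ Dense S

section AuxStrichartz

lemma norm_exp_I (r : ℝ) : ‖Complex.exp (↑r * Complex.I)‖ = 1 := by
  simp [Complex.norm_exp]

variable (μ : Measure ℝ) [IsFiniteMeasure μ]

lemma ft_sq (s : ℝ) : ‖measureFT μ s‖^2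
    = ∫ p : ℝ × ℝ, Real.cos (s * (p.1 - p.2)) ∂(μ.prod μ) := by
  have hconj : (starRingEnd ℂ) (measureFT μ s) = ∫ y, Complex.exp ((s * y : ℝ) * Complex.I) ∂μ := by
    rw [measureFT, ← integral_conj]
    congr 1; ext y
    rw [← Complex.exp_conj]
    congr 1
    simp [Complex.conj_I]
  have hsq : ‖measureFT μ s‖^2 = (measureFT μ s * (starRingEnd ℂ) (measureFT μ s)).re := by
    rw [Complex.mul_conj]
    simp [Complex.sq_norm]
  rw [hsq, hconj, measureFT, ← integral_prod_mul]
  have heq : ∀ p : ℝ × ℝ, Complex.exp (-(↑s * ↑p.1) * Complex.I) * Complex.exp ((s * p.2 : ℝ) * Complex.I)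
      = Complex.exp ((-(s * (p.1 - p.2)) : ℝ) * Complex.I) := by
    intro p
    rw [← Complex.exp_add]
    congr 1
    push_cast
    ring
  simp_rw [heq]
  have hint : Integrable (fun p : ℝ × ℝ => Complex.exp ((-(s * (p.1 - p.2)) : ℝ) * Complex.I)) (μ.prod μ) := by
    apply Integrable.mono' (integrable_const 1)
    · exact (Complex.continuous_exp.comp (by continuity)).aestronglyMeasurable
    · filter_upwards with p
      rw [norm_exp_I]
  have h2 := integral_re hint
  simp only [RCLike.re_to_complex] at h2
  rw [← h2]
  congr 1; ext p
  rw [Complex.exp_ofReal_mul_I_re, Real.cos_neg]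

set_option linter.unusedSectionVars false in
lemma ft_norm_le (s : ℝ) : ‖measureFT μ s‖ ≤ (μ Set.univ).toReal := by
  rw [measureFT]
  calc ‖∫ x : ℝ, Complex.exp (-(s * x) * Complex.I) ∂μ‖
      ≤ ∫ x : ℝ, ‖Complex.exp (-(s * x) * Complex.I)‖ ∂μ := norm_integral_le_integral_norm _
    _ = ∫ _x : ℝ, (1:ℝ) ∂μ := by
        congr 1; ext x
        rw [show -(↑s * ↑x) * Complex.I = ((-(s*x):ℝ):ℂ) * Complex.I by push_cast; ring,
          norm_exp_I]
    _ = (μ Set.univ).toReal := by simp [measureReal_def]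

lemma ft_cont : Continuous (fun s => measureFT μ s) := by
  apply continuous_of_dominated (bound := fun _ => (1:ℝ))
  · intro s
    exact (Complex.continuous_exp.comp (by continuity)).aestronglyMeasurable
  · intro s
    filter_upwards with x
    rw [show -(↑s * ↑x) * Complex.I = ((-(s*x):ℝ):ℂ) * Complex.I by push_cast; ring, norm_exp_I]
  · exact integrable_const 1
  · filter_upwards with x
    exact Complex.continuous_exp.comp (by continuity)

def Sker (r u : ℝ) : ℝ := if u = 0 then r else Real.sin (r*u)/u

def Kker (T u : ℝ) : ℝ := if u = 0 then T^2/2 else (1 - Real.cos (T*u))/u^2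

lemma integral_cos_Ioc (r u : ℝ) (hr : 0 ≤ r) :
    ∫ s in Ioc (0:ℝ) r, Real.cos (s*u) = Sker r u := by
  rw [← intervalIntegral.integral_of_le hr]
  by_cases hu : u = 0
  · simp [Sker, hu]
  · simp_rw [mul_comm _ u]
    rw [intervalIntegral.integral_comp_mul_left Real.cos hu]
    simp only [mul_zero, integral_cos, Real.sin_zero, sub_zero, smul_eq_mul,
      Sker, if_neg hu]
    rw [mul_comm r u]
    ring

lemma integral_sker_Ioc (T u : ℝ) (hT : 0 ≤ T) :
    ∫ r in Ioc (0:ℝ) T, Sker r u = Kker T u := by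
  rw [← intervalIntegral.integral_of_le hT]
  by_cases hu : u = 0
  · simp only [Sker, Kker, if_pos hu]
    rw [integral_id]
    ring
  · simp only [Sker, Kker, if_neg hu]
    simp_rw [div_eq_mul_inv, mul_comm _ u]
    rw [intervalIntegral.integral_mul_const, intervalIntegral.integral_comp_mul_left Real.sin hu]
    simp only [mul_zero, integral_sin, Real.cos_zero, smul_eq_mul]
    rw [mul_comm u T]
    field_simp

lemma sker_abs_le (r u : ℝ) : |Sker r u| ≤ |r| := by
  unfold Sker
  split_ifs with h
  · exact le_refl _
  · rw [abs_div]
    calc |Real.sin (r*u)| / |u| ≤ |r*u| / |u| :=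
          (div_le_div_iff_of_pos_right (abs_pos.2 h)).2 Real.abs_sin_le_abs
      _ = |r| := by rw [abs_mul, mul_div_assoc, div_self (abs_ne_zero.2 h), mul_one]

lemma sker_meas : Measurable (fun q : ℝ × (ℝ × ℝ) => Sker q.1 (q.2.1 - q.2.2)) := by
  unfold Sker
  apply Measurable.ite
  · exact measurableSet_eq_fun (by fun_prop) measurable_const
  · fun_prop
  · fun_prop

lemma G_eq (r : ℝ) (hr : 0 ≤ r) :
    ∫ s in Ioc (0:ℝ) r, ‖measureFT μ s‖^2
      = ∫ p : ℝ × ℝ, Sker r (p.1 - p.2) ∂(μ.prod μ) := by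
  simp_rw [ft_sq μ]
  haveI : IsFiniteMeasure ((volume : Measure ℝ).restrict (Ioc (0:ℝ) r)) :=
    ⟨by rw [Measure.restrict_apply_univ]; exact measure_Ioc_lt_top⟩
  have hint : Integrable (Function.uncurry fun s (p : ℝ × ℝ) => Real.cos (s * (p.1 - p.2)))
      (((volume : Measure ℝ).restrict (Ioc (0:ℝ) r)).prod (μ.prod μ)) := by
    apply Integrable.mono' (integrable_const (1:ℝ))
    · exact (Real.continuous_cos.comp (by fun_prop)).aestronglyMeasurable
    · filter_upwards with q
      exact (Real.abs_cos_le_one _)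
  rw [MeasureTheory.integral_integral_swap hint]
  congr 1
  ext p
  exact integral_cos_Ioc r (p.1 - p.2) hr

lemma K_eq (T : ℝ) (hT : 0 ≤ T) :
    ∫ r in Ioc (0:ℝ) T, (∫ s in Ioc (0:ℝ) r, ‖measureFT μ s‖^2)
      = ∫ p : ℝ × ℝ, Kker T (p.1 - p.2) ∂(μ.prod μ) := by
  rw [setIntegral_congr_fun measurableSet_Ioc (fun r hr => G_eq μ r hr.1.le)]
  haveI : IsFiniteMeasure ((volume : Measure ℝ).restrict (Ioc (0:ℝ) T)) :=
    ⟨by rw [Measure.restrict_apply_univ]; exact measure_Ioc_lt_top⟩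
  have hb : Integrable (fun q : ℝ × (ℝ × ℝ) => |q.1| * 1)
      (((volume : Measure ℝ).restrict (Ioc (0:ℝ) T)).prod (μ.prod μ)) := by
    exact Integrable.mul_prod (L := ℝ) ((continuous_abs).integrableOn_Ioc) (integrable_const 1)
  have hint : Integrable (Function.uncurry fun r (p : ℝ × ℝ) => Sker r (p.1 - p.2))
      (((volume : Measure ℝ).restrict (Ioc (0:ℝ) T)).prod (μ.prod μ)) := by
    apply Integrable.mono' hb
    · exact sker_meas.aestronglyMeasurable
    · filter_upwards with q
      simpa [Function.uncurry_def] using sker_abs_le q.1 (q.2.1 - q.2.2)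
  rw [MeasureTheory.integral_integral_swap hint]
  congr 1
  ext p
  exact integral_sker_Ioc T (p.1 - p.2) hT

lemma one_sub_cos_le_half_sq (x : ℝ) : 1 - Real.cos x ≤ x^2/2 := by
  have h1 : Real.sin (x/2) ^ 2 = 1/2 - Real.cos x / 2 := by
    rw [Real.sin_sq_eq_half_sub, show 2*(x/2) = x by ring]
  have h2 : Real.sin (x/2) ^ 2 ≤ (x/2)^2 := Real.sin_sq_le_sq
  nlinarith

def phit (t u : ℝ) : ℝ := if u = 0 then 2 else min 2 (2/(t*u)^2)

lemma phit_nonneg (t u : ℝ) : 0 ≤ phit t u := by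
  unfold phit; split_ifs
  · norm_num
  · exact le_min (by norm_num) (by positivity)

lemma phit_le_two (t u : ℝ) : phit t u ≤ 2 := by
  unfold phit; split_ifs
  · exact le_refl _
  · exact min_le_left _ _

lemma kker_le_phit (t : ℝ) (ht : 0 < t) (u : ℝ) : Kker (2*t) u ≤ t^2 * phit t u := by
  unfold Kker phit
  split_ifs with hu
  · rw [mul_pow]; nlinarith
  · rw [mul_min_of_nonneg _ _ (by positivity : (0:ℝ) ≤ t^2)]
    apply le_min
    · have h := one_sub_cos_le_half_sq (2*t*u)
      have hu2 : (0:ℝ) < u^2 := by positivity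
      rw [div_le_iff₀ hu2]
      nlinarith
    · have hcos : -1 ≤ Real.cos (2*t*u) := Real.neg_one_le_cos _
      have he : t^2 * (2/(t*u)^2) = 2/u^2 := by
        field_simp
      rw [he]
      apply div_le_div_of_nonneg_right ?h1 ?h2 |>.trans_eq rfl
      case h1 => nlinarith
      case h2 => positivity

lemma exists_dyadic (a : ℝ) (ha : 1 < a) : ∃ k : ℕ, (2:ℝ)^k < a ∧ a ≤ 2^(k+1) := by
  have hex : ∃ n : ℕ, a ≤ 2^(n+1) := by
    obtain ⟨n, hn⟩ := pow_unbounded_of_one_lt a (one_lt_two (α := ℝ))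
    exact ⟨n, hn.le.trans (by apply pow_le_pow_right₀ one_le_two; omega)⟩
  classical
  refine ⟨Nat.find hex, ?_, Nat.find_spec hex⟩
  rcases Nat.eq_zero_or_pos (Nat.find hex) with h0 | hpos
  · rw [h0]; simpa using ha
  · have := Nat.find_min hex (Nat.sub_lt hpos one_pos)
    push_neg at this
    calc (2:ℝ)^(Nat.find hex) = 2^(Nat.find hex - 1 + 1) := by congr 1; omega
      _ < a := this

lemma exists_N (t : ℝ) (ht : 4 < t) : ∃ N : ℕ, (2:ℝ)^(N+2) < t ∧ t ≤ 2^(N+3) := by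
  have hex : ∃ n : ℕ, t ≤ 2^(n+3) := by
    obtain ⟨n, hn⟩ := pow_unbounded_of_one_lt t (one_lt_two (α := ℝ))
    exact ⟨n, hn.le.trans (pow_le_pow_right₀ one_le_two (by omega))⟩
  classical
  refine ⟨Nat.find hex, ?_, Nat.find_spec hex⟩
  rcases Nat.eq_zero_or_pos (Nat.find hex) with h0 | hpos
  · rw [h0]; norm_num; linarith
  · have hmin := Nat.find_min hex (Nat.sub_lt hpos one_pos)
    push_neg at hmin
    calc (2:ℝ)^(Nat.find hex + 2) = 2^(Nat.find hex - 1 + 3) := by congr 1; omega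
      _ < t := hmin

lemma phit_le_sum (t : ℝ) (ht : 4 < t) (N : ℕ) (hN1 : (2:ℝ)^(N+2) < t) (hN2 : t ≤ 2^(N+3))
    (x y : ℝ) :
    phit t (x - y) ≤ 128/t^2 + ∑ k ∈ Finset.range N,
      (2 * (4:ℝ)⁻¹^k) * Set.indicator (Icc (x - 2^(k+1)/t) (x + 2^(k+1)/t)) (fun _ => (1:ℝ)) y := by
  have ht0 : (0:ℝ) < t := by linarith
  have htermnn : ∀ k ∈ Finset.range N, 0 ≤ (2 * (4:ℝ)⁻¹^k) *
      Set.indicator (Icc (x - 2^(k+1)/t) (x + 2^(k+1)/t)) (fun _ => (1:ℝ)) y := by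
    intro k _
    apply mul_nonneg (by positivity)
    exact Set.indicator_nonneg (fun _ _ => by norm_num) y
  have hsumnn : 0 ≤ ∑ k ∈ Finset.range N, (2 * (4:ℝ)⁻¹^k) *
      Set.indicator (Icc (x - 2^(k+1)/t) (x + 2^(k+1)/t)) (fun _ => (1:ℝ)) y :=
    Finset.sum_nonneg htermnn
  have hdivnn : (0:ℝ) ≤ 128/t^2 := by positivity
  set u := x - y with hu
  have hsingle : ∀ k, k < N → |u| ≤ 2^(k+1)/t →
      (2 * (4:ℝ)⁻¹^k) ≤ ∑ k ∈ Finset.range N, (2 * (4:ℝ)⁻¹^k) *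
        Set.indicator (Icc (x - 2^(k+1)/t) (x + 2^(k+1)/t)) (fun _ => (1:ℝ)) y := by
    intro k hkN habs
    have hmem : y ∈ Icc (x - 2^(k+1)/t) (x + 2^(k+1)/t) := by
      obtain ⟨h1, h2⟩ := abs_le.1 habs
      constructor
      · rw [← hu] at *; linarith
      · rw [← hu] at *; linarith
    have heq1 : (2 * (4:ℝ)⁻¹^k) * Set.indicator (Icc (x - 2^(k+1)/t) (x + 2^(k+1)/t))
        (fun _ => (1:ℝ)) y = 2 * (4:ℝ)⁻¹^k := by
      rw [Set.indicator_of_mem hmem, mul_one]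
    calc (2 * (4:ℝ)⁻¹^k) = _ := heq1.symm
      _ ≤ _ := Finset.single_le_sum htermnn (Finset.mem_range.2 hkN)
  have h8 : t ≤ 8 * 2^N := by
    calc t ≤ 2^(N+3) := hN2
      _ = 8 * 2^N := by rw [pow_add]; ring
  by_cases hcase1 : (2:ℝ)^N < t * |u|
  · -- tail estimate
    have hune : u ≠ 0 := by
      intro h0
      rw [h0] at hcase1
      simp only [abs_zero, mul_zero] at hcase1
      have : (0:ℝ) < 2^N := by positivity
      linarith
    have hphit : phit t u ≤ 2/(t*u)^2 := by
      unfold phit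
      rw [if_neg hune]
      exact min_le_right _ _
    have hsq : (t*u)^2 = (t*|u|)^2 := by rw [mul_pow, mul_pow, sq_abs]
    have h2N : (0:ℝ) < 2^N := by positivity
    have habs0 : 0 ≤ |u| := abs_nonneg u
    have hle : 2/(t*u)^2 ≤ 128/t^2 := by
      rw [div_le_div_iff₀ (by rw [hsq]; positivity) (by positivity), hsq]
      nlinarith [sq_nonneg (t*|u| - 2^N), sq_nonneg (8*2^N - t)]
    linarith [hphit.trans hle]
  · push_neg at hcase1
    by_cases hcase2 : t * |u| ≤ 1
    · have hphit : phit t u ≤ 2 := phit_le_two t u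
      rcases Nat.eq_zero_or_pos N with hN0 | hNpos
      · subst hN0
        have h128 : (2:ℝ) ≤ 128/t^2 := by
          rw [le_div_iff₀ (by positivity)]
          have : (2:ℝ)^(0+3) = 8 := by norm_num
          rw [this] at hN2
          nlinarith
        simp only [Finset.range_zero, Finset.sum_empty, add_zero]
        linarith
      · have habs : |u| ≤ 2^(0+1)/t := by
          rw [le_div_iff₀ ht0]
          norm_num
          nlinarith [abs_nonneg u]
        have hs := hsingle 0 hNpos habs
        simp only [pow_zero, mul_one] at hs
        linarith
    · push_neg at hcase2
      obtain ⟨k, hk1, hk2⟩ := exists_dyadic (t*|u|) hcase2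
      have hkN : k < N := by
        by_contra hcon
        push_neg at hcon
        have : (2:ℝ)^N ≤ 2^k := pow_le_pow_right₀ one_le_two hcon
        linarith
      have hune : u ≠ 0 := by
        intro h0
        rw [h0] at hcase2
        simp only [abs_zero, mul_zero] at hcase2
        linarith
      have habs : |u| ≤ 2^(k+1)/t := by
        rw [le_div_iff₀ ht0]
        linarith [hk2]
      have hphit : phit t u ≤ 2 * (4:ℝ)⁻¹^k := by
        unfold phit
        rw [if_neg hune]
        have hsq : (t*u)^2 = (t*|u|)^2 := by rw [mul_pow, mul_pow, sq_abs]
        have h4k : ((2:ℝ)^k)^2 = 4^k := by rw [sq, ← mul_pow]; norm_num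
        have h4pos : (0:ℝ) < 4^k := by positivity
        calc min 2 (2/(t*u)^2) ≤ 2/(t*u)^2 := min_le_right _ _
          _ ≤ 2 * (4:ℝ)⁻¹^k := by
              rw [hsq, inv_pow, div_le_iff₀ (by positivity)]
              have h2kpos : (0:ℝ) < 2^k := by positivity
              have h1 : (4:ℝ)^k ≤ (t*|u|)^2 := by
                nlinarith [sq_nonneg (t*|u| - 2^k), mul_lt_mul_of_pos_left hk1 h2kpos]
              have h2 : (1:ℝ) ≤ ((4:ℝ)^k)⁻¹ * (t*|u|)^2 := by
                have h3 := mul_le_mul_of_nonneg_left h1 (inv_nonneg.2 h4pos.le)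
                rwa [inv_mul_cancel₀ (ne_of_gt h4pos)] at h3
              nlinarith
      have hs := hsingle k hkN habs
      linarith

lemma phit_meas (t : ℝ) : Measurable (phit t) := by
  unfold phit
  apply Measurable.ite
  · rw [show {u : ℝ | u = 0} = {(0:ℝ)} from Set.setOf_eq_eq_singleton]
    exact measurableSet_singleton 0
  · exact measurable_const
  · fun_prop

lemma geom_aux (k : ℕ) : (4:ℝ)⁻¹^k * 2^(k+2) = 4 * 2⁻¹^k := by
  have e1 : (2⁻¹:ℝ)^k * 2^k = 1 := by rw [← mul_pow]; norm_num
  rw [pow_add, show ((2:ℝ))^2 = 4 by norm_num, show ((4:ℝ))⁻¹ = 2⁻¹*2⁻¹ by norm_num, mul_pow]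
  linear_combination 4 * (2⁻¹:ℝ)^k * e1

lemma inner_bound (α C : ℝ) (hC : 0 < C) (hα1 : α ≤ 1)
    (hH : ∀ a b : ℝ, a < b → b - a < 1 → μ (Icc a b) < ENNReal.ofReal (C * (b - a) ^ α))
    (t : ℝ) (ht : 4 < t) (x : ℝ) :
    ∫ y, phit t (x - y) ∂μ ≤ (16*C + 128 * (μ Set.univ).toReal) * t^(-α) := by
  obtain ⟨N, hN1, hN2⟩ := exists_N t ht
  have ht0 : (0:ℝ) < t := by linarith
  have ht1 : (1:ℝ) ≤ t := by linarith
  set M := (μ Set.univ).toReal with hM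
  have hMnn : 0 ≤ M := ENNReal.toReal_nonneg
  have hmeas : Measurable (fun y => phit t (x - y)) :=
    (phit_meas t).comp (measurable_const.sub measurable_id)
  have hint1 : Integrable (fun y => phit t (x - y)) μ := by
    apply Integrable.mono' (integrable_const (2:ℝ)) hmeas.aestronglyMeasurable
    filter_upwards with y
    rw [Real.norm_eq_abs, abs_of_nonneg (phit_nonneg _ _)]
    exact phit_le_two _ _
  have hint2 : Integrable (fun y => 128/t^2 + ∑ k ∈ Finset.range N,
      (2 * (4:ℝ)⁻¹^k) * Set.indicator (Icc (x - 2^(k+1)/t) (x + 2^(k+1)/t))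
        (fun _ => (1:ℝ)) y) μ := by
    apply (integrable_const _).add
    apply integrable_finset_sum
    intro k _
    exact ((integrable_const (1:ℝ)).indicator measurableSet_Icc).const_mul _
  have hmono := integral_mono hint1 hint2 (fun y => phit_le_sum t ht N hN1 hN2 x y)
  rw [integral_add (integrable_const _) (by
      apply integrable_finset_sum
      intro k _
      exact ((integrable_const (1:ℝ)).indicator measurableSet_Icc).const_mul _),
    integral_const, integral_finset_sum _ (fun k _ =>
      ((integrable_const (1:ℝ)).indicator measurableSet_Icc).const_mul _)] at hmono
  have hIcc : ∀ k, k < N → (μ (Icc (x - 2^(k+1)/t) (x + 2^(k+1)/t))).toReal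
      ≤ C * (2^(k+2) * t^(-α)) := by
    intro k hkN
    have hab : x - 2^(k+1)/t < x + 2^(k+1)/t := by
      have : (0:ℝ) < 2^(k+1)/t := by positivity
      linarith
    have hba : (x + 2^(k+1)/t) - (x - 2^(k+1)/t) = 2^(k+2)/t := by
      rw [pow_add]
      ring
    have hlt1 : (x + 2^(k+1)/t) - (x - 2^(k+1)/t) < 1 := by
      rw [hba, div_lt_one ht0]
      calc (2:ℝ)^(k+2) ≤ 2^(N+1) := pow_le_pow_right₀ one_le_two (by omega)
        _ < 2^(N+2) := by
            apply pow_lt_pow_right₀ one_lt_two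
            omega
        _ < t := hN1
    have h := hH _ _ hab hlt1
    rw [hba] at h
    have htr : (μ (Icc (x - 2^(k+1)/t) (x + 2^(k+1)/t))).toReal
        ≤ C * ((2:ℝ)^(k+2)/t) ^ α := by
      apply ENNReal.toReal_le_of_le_ofReal
      · positivity
      · exact h.le
    apply htr.trans
    have hrw : ((2:ℝ)^(k+2)/t) ^ α = ((2:ℝ)^(k+2))^α * t^(-α) := by
      rw [Real.div_rpow (by positivity) ht0.le, Real.rpow_neg ht0.le, div_eq_mul_inv]
    rw [hrw]
    have h2a : ((2:ℝ)^(k+2))^α ≤ 2^(k+2) := by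
      calc ((2:ℝ)^(k+2))^α ≤ ((2:ℝ)^(k+2))^(1:ℝ) :=
            Real.rpow_le_rpow_of_exponent_le (one_le_pow₀ one_le_two) hα1
        _ = 2^(k+2) := Real.rpow_one _
    have htnn : (0:ℝ) ≤ t^(-α) := Real.rpow_nonneg ht0.le _
    have := mul_le_mul_of_nonneg_right h2a htnn
    nlinarith
  have hsum : ∑ k ∈ Finset.range N, ∫ y, (2 * (4:ℝ)⁻¹^k) *
      Set.indicator (Icc (x - 2^(k+1)/t) (x + 2^(k+1)/t)) (fun _ => (1:ℝ)) y ∂μ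
      ≤ 16*C*t^(-α) := by
    have hterm : ∀ k, k < N → ∫ y, (2 * (4:ℝ)⁻¹^k) *
        Set.indicator (Icc (x - 2^(k+1)/t) (x + 2^(k+1)/t)) (fun _ => (1:ℝ)) y ∂μ
        ≤ 8*C*t^(-α) * 2⁻¹^k := by
      intro k hkN
      rw [MeasureTheory.integral_const_mul, MeasureTheory.integral_indicator_const _ measurableSet_Icc]
      have h1 := hIcc k hkN
      have h2 : (0:ℝ) ≤ 2 * (4:ℝ)⁻¹^k := by positivity
      have h3 := mul_le_mul_of_nonneg_left h1 h2
      calc (2 * (4:ℝ)⁻¹^k) * ((μ (Icc (x - 2^(k+1)/t) (x + 2^(k+1)/t))).toReal • (1:ℝ))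
          = (2 * (4:ℝ)⁻¹^k) * (μ (Icc (x - 2^(k+1)/t) (x + 2^(k+1)/t))).toReal := by
            rw [smul_eq_mul, mul_one]
        _ ≤ (2 * (4:ℝ)⁻¹^k) * (C * (2^(k+2) * t^(-α))) := h3
        _ = 8*C*t^(-α) * 2⁻¹^k := by
            linear_combination (2*C*t^(-α)) * geom_aux k
    calc ∑ k ∈ Finset.range N, ∫ y, (2 * (4:ℝ)⁻¹^k) *
          Set.indicator (Icc (x - 2^(k+1)/t) (x + 2^(k+1)/t)) (fun _ => (1:ℝ)) y ∂μ
        ≤ ∑ k ∈ Finset.range N, 8*C*t^(-α) * 2⁻¹^k :=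
          Finset.sum_le_sum (fun k hk => hterm k (Finset.mem_range.1 hk))
      _ = 8*C*t^(-α) * ∑ k ∈ Finset.range N, 2⁻¹^k := by rw [Finset.mul_sum]
      _ ≤ 8*C*t^(-α) * 2 := by
          apply mul_le_mul_of_nonneg_left _ (by positivity)
          have := sum_geometric_two_le N
          simpa [one_div] using this
      _ = 16*C*t^(-α) := by ring
  have hconst : M • (128/t^2) ≤ 128 * M * t^(-α) := by
    rw [smul_eq_mul]
    have h1 : t^(-(2:ℝ)) ≤ t^(-α) := Real.rpow_le_rpow_of_exponent_le ht1 (by linarith)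
    have h2 : t^(-(2:ℝ)) = 1/t^2 := by
      rw [Real.rpow_neg ht0.le, one_div]
      congr 1
      rw [show ((2:ℝ)) = ((2:ℕ):ℝ) by norm_num, Real.rpow_natCast]
    have h3 : 128/t^2 = 128 * t^(-(2:ℝ)) := by rw [h2]; ring
    rw [h3]
    have := mul_le_mul_of_nonneg_left h1 (by linarith : (0:ℝ) ≤ 128)
    nlinarith
  calc ∫ y, phit t (x - y) ∂μ ≤ _ := hmono
    _ ≤ 128 * M * t^(-α) + 16*C*t^(-α) := add_le_add hconst hsum
    _ = (16*C + 128 * M) * t^(-α) := by ring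

lemma kker_meas (T : ℝ) : Measurable (Kker T) := by
  unfold Kker
  apply Measurable.ite
  · rw [show {u : ℝ | u = 0} = {(0:ℝ)} from Set.setOf_eq_eq_singleton]
    exact measurableSet_singleton 0
  · exact measurable_const
  · fun_prop

lemma kker_nonneg (T u : ℝ) : 0 ≤ Kker T u := by
  unfold Kker
  split_ifs
  · positivity
  · apply div_nonneg _ (sq_nonneg u)
    nlinarith [Real.cos_le_one (T*u)]


end AuxStrichartz

/-- If `μ` is a finite uniformly `α`-Hölder continuous Borel measure on `ℝ`,
then there is `C > 0` with `W_μ(t) < C t^{-α}` for all `t > 0`. -/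
theorem stmt_0 (α : ℝ) (hα : α ∈ Set.Icc (0 : ℝ) 1) (μ : Measure ℝ) [IsFiniteMeasure μ]
    (hμ : UnifHolder μ α) :
    ∃ C > (0 : ℝ), ∀ t > (0 : ℝ), Wavg μ t < C * t ^ (-α) := by
  obtain ⟨C, hC, hH⟩ := hμ
  obtain ⟨hα0, hα1⟩ := hα
  set M := (μ Set.univ).toReal with hM
  have hMnn : 0 ≤ M := ENNReal.toReal_nonneg
  set K := (16*C + 128*M) * M + 5*M^2 + 5 with hK
  have hAnn : (0:ℝ) ≤ (16*C + 128*M) * M := mul_nonneg (by linarith) hMnn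
  have hKpos : 0 < K := by nlinarith
  refine ⟨K, hKpos, ?_⟩
  intro t ht
  have hFcont : Continuous (fun s : ℝ => ‖measureFT μ s‖^2) := (ft_cont μ).norm.pow 2
  have hFnn : ∀ s : ℝ, 0 ≤ ‖measureFT μ s‖^2 := fun s => by positivity
  have hFle : ∀ s : ℝ, ‖measureFT μ s‖^2 ≤ M^2 := fun s =>
    pow_le_pow_left₀ (norm_nonneg _) (ft_norm_le μ s) 2
  have hFint : ∀ r : ℝ, IntegrableOn (fun s => ‖measureFT μ s‖^2) (Ioc 0 r) := fun r =>
    hFcont.integrableOn_Ioc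
  set G : ℝ → ℝ := fun r => ∫ s in Ioc (0:ℝ) r, ‖measureFT μ s‖^2 with hG
  have hGnn : ∀ r, 0 ≤ G r := fun r =>
    setIntegral_nonneg measurableSet_Ioc (fun s _ => hFnn s)
  have hGmono : Monotone G := by
    intro r1 r2 h12
    apply setIntegral_mono_set (hFint r2) (Filter.Eventually.of_forall hFnn)
    exact (Ioc_subset_Ioc_right h12).eventuallyLE
  have hGleM : ∀ r : ℝ, 0 < r → G r ≤ M^2 * r := by
    intro r hr
    calc G r ≤ ∫ _s in Ioc (0:ℝ) r, M^2 :=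
          setIntegral_mono_on (hFint r) (integrableOn_const measure_Ioc_lt_top.ne)
            measurableSet_Ioc (fun s _ => hFle s)
      _ = M^2 * r := by
          rw [setIntegral_const, measureReal_def, Real.volume_Ioc, smul_eq_mul,
            ENNReal.toReal_ofReal (by linarith)]
          ring
  have hW_eq : Wavg μ t = (1/t) * G t := rfl
  by_cases hts : t ≤ 5
  · have hWle : Wavg μ t ≤ M^2 := by
      rw [hW_eq, one_div]
      have h1 := hGleM t ht
      calc t⁻¹ * G t ≤ t⁻¹ * (M^2 * t) :=
            mul_le_mul_of_nonneg_left h1 (inv_nonneg.2 ht.le)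
        _ = M^2 := by field_simp
    have htα : (5:ℝ)⁻¹ ≤ t^(-α) := by
      calc (5:ℝ)⁻¹ = (5:ℝ)^(-(1:ℝ)) := (Real.rpow_neg_one 5).symm
        _ ≤ (5:ℝ)^(-α) := Real.rpow_le_rpow_of_exponent_le (by norm_num) (by linarith)
        _ ≤ t^(-α) := Real.rpow_le_rpow_of_nonpos ht hts (neg_nonpos.2 hα0)
    have h6 : M^2 < K * 5⁻¹ := by nlinarith
    have h7 : K * 5⁻¹ ≤ K * t^(-α) := mul_le_mul_of_nonneg_left htα hKpos.le
    exact lt_of_le_of_lt hWle (lt_of_lt_of_le h6 h7)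
  · push_neg at hts
    have ht4 : (4:ℝ) < t := by linarith
    have ht0 : (0:ℝ) < t := by linarith
    have hGint : IntegrableOn G (Ioc 0 (2*t)) := by
      apply Integrable.mono' (integrable_const (M^2 * (2*t)))
        (hGmono.measurable.aestronglyMeasurable)
      filter_upwards [ae_restrict_mem measurableSet_Ioc] with r hr
      rw [Real.norm_eq_abs, abs_of_nonneg (hGnn r)]
      exact (hGleM r hr.1).trans (by nlinarith [hr.2, sq_nonneg M])
    have hstep1 : t * G t ≤ ∫ r in Ioc (0:ℝ) (2*t), G r := by
      have e1 : ∫ _r in Ioc t (2*t), G t = t * G t := by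
        rw [setIntegral_const, measureReal_def, Real.volume_Ioc, smul_eq_mul,
          show 2*t - t = t by ring, ENNReal.toReal_ofReal ht0.le]
      calc t * G t = _ := e1.symm
        _ ≤ ∫ r in Ioc t (2*t), G r :=
            setIntegral_mono_on (integrableOn_const measure_Ioc_lt_top.ne)
              (hGint.mono_set (Ioc_subset_Ioc_left ht0.le)) measurableSet_Ioc
              (fun r hr => hGmono hr.1.le)
        _ ≤ ∫ r in Ioc 0 (2*t), G r :=
            setIntegral_mono_set hGint (Filter.Eventually.of_forall hGnn)
              (Ioc_subset_Ioc_left ht0.le).eventuallyLE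
    have hstep2 : ∫ r in Ioc (0:ℝ) (2*t), G r
        = ∫ p : ℝ×ℝ, Kker (2*t) (p.1 - p.2) ∂(μ.prod μ) := K_eq μ (2*t) (by linarith)
    have hphimeas : Measurable (fun p : ℝ×ℝ => phit t (p.1 - p.2)) :=
      (phit_meas t).comp (measurable_fst.sub measurable_snd)
    have hKmeas : Measurable (fun p : ℝ×ℝ => Kker (2*t) (p.1 - p.2)) :=
      (kker_meas (2*t)).comp (measurable_fst.sub measurable_snd)
    have hphint : Integrable (fun p : ℝ×ℝ => phit t (p.1 - p.2)) (μ.prod μ) := by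
      apply Integrable.mono' (integrable_const (2:ℝ)) hphimeas.aestronglyMeasurable
      filter_upwards with p
      rw [Real.norm_eq_abs, abs_of_nonneg (phit_nonneg _ _)]
      exact phit_le_two _ _
    have hKint : Integrable (fun p : ℝ×ℝ => Kker (2*t) (p.1 - p.2)) (μ.prod μ) := by
      apply Integrable.mono' (integrable_const (t^2 * 2)) hKmeas.aestronglyMeasurable
      filter_upwards with p
      rw [Real.norm_eq_abs, abs_of_nonneg (kker_nonneg _ _)]
      calc Kker (2*t) (p.1 - p.2) ≤ t^2 * phit t (p.1 - p.2) := kker_le_phit t ht0 _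
        _ ≤ t^2 * 2 := mul_le_mul_of_nonneg_left (phit_le_two _ _) (sq_nonneg t)
    have hstep3 : ∫ p : ℝ×ℝ, Kker (2*t) (p.1 - p.2) ∂(μ.prod μ)
        ≤ t^2 * ∫ p : ℝ×ℝ, phit t (p.1 - p.2) ∂(μ.prod μ) := by
      rw [← MeasureTheory.integral_const_mul]
      exact integral_mono hKint (hphint.const_mul _) (fun p => kker_le_phit t ht0 _)
    have hstep4 : ∫ p : ℝ×ℝ, phit t (p.1 - p.2) ∂(μ.prod μ)
        ≤ (16*C + 128*M) * t^(-α) * M := by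
      rw [MeasureTheory.integral_prod _ hphint]
      calc ∫ x, ∫ y, phit t (x - y) ∂μ ∂μ
          ≤ ∫ _x, (16*C + 128*M) * t^(-α) ∂μ := by
            apply integral_mono (hphint.integral_prod_left) (integrable_const _)
            intro x
            exact inner_bound μ α C hC hα1 hH t ht4 x
        _ = (16*C + 128*M) * t^(-α) * M := by
            rw [integral_const, smul_eq_mul, measureReal_def, ← hM]
            ring
    have htpos : (0:ℝ) < t^(-α) := Real.rpow_pos_of_pos ht0 _
    have hchain : t * G t ≤ t * (t * ((16*C + 128*M) * t^(-α) * M)) := by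
      calc t * G t ≤ ∫ r in Ioc (0:ℝ) (2*t), G r := hstep1
        _ = ∫ p : ℝ×ℝ, Kker (2*t) (p.1 - p.2) ∂(μ.prod μ) := hstep2
        _ ≤ t^2 * ∫ p : ℝ×ℝ, phit t (p.1 - p.2) ∂(μ.prod μ) := hstep3
        _ ≤ t^2 * ((16*C + 128*M) * t^(-α) * M) :=
            mul_le_mul_of_nonneg_left hstep4 (sq_nonneg t)
        _ = t * (t * ((16*C + 128*M) * t^(-α) * M)) := by ring
    have hGt : G t ≤ t * ((16*C + 128*M) * t^(-α) * M) :=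
      le_of_mul_le_mul_left hchain ht0
    have hWle : Wavg μ t ≤ (16*C + 128*M) * M * t^(-α) := by
      rw [hW_eq, one_div]
      calc t⁻¹ * G t ≤ t⁻¹ * (t * ((16*C + 128*M) * t^(-α) * M)) :=
            mul_le_mul_of_nonneg_left hGt (inv_nonneg.2 ht0.le)
        _ = (16*C + 128*M) * M * t^(-α) := by field_simp
    have hfin : (16*C + 128*M) * M * t^(-α) < K * t^(-α) := by
      apply mul_lt_mul_of_pos_right _ htpos
      nlinarith
    linarith
end
end

section
/- Let α ∈ [0,1] and let μ be a finite positive Borel measure on ℝ. If there exists a constant C > 0 such that W_μ(t) < C·t^(−α) for every t > 0, then μ is uniformly (α/2)-Hölder continuous. -/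
open MeasureTheory Filter Set Metric
open scoped ENNReal Topology Classical

noncomputable section

/-! Fubini turns the weighted time average `∫₀ᵀ (1 - s/T) |μ̂(s)|² ds` into the energy
`∬ K_T(x - y) dμ(x) dμ(y)` of the Fejér kernel `K_T(u) = (1 - cos Tu) / (T u²)`, which is
nonnegative and at least `T/4` for `|u| ≤ 1/T`. Restricting the double integral to `I × I` for an
interval `I` of length `1/T` gives `T/4 · μ(I)² ≤ ∫₀ᵀ |μ̂|² = T · W_μ(T) < C T^{1-α}`,
that is, `μ(I)² < 4 C |I|^α`. -/

lemma measureFT_eq_charFun (μ : Measure ℝ) (s : ℝ) : measureFT μ s = charFun μ (-s) := by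
  rw [measureFT, charFun_apply_real]
  congr with x
  push_cast
  ring_nf

@[fun_prop]
lemma continuous_measureFT (μ : Measure ℝ) [IsFiniteMeasure μ] : Continuous (measureFT μ) := by
  rw [funext (measureFT_eq_charFun μ)]
  exact continuous_charFun.comp continuous_neg

lemma sq_norm_charFun_eq_integral_cos (μ : Measure ℝ) [IsFiniteMeasure μ] (t : ℝ) :
    ‖charFun μ t‖ ^ 2 = ∫ p : ℝ × ℝ, Real.cos (t * (p.1 - p.2)) ∂μ.prod μ := by
  have hprod : charFun μ t * charFun μ (-t) =
      ∫ p : ℝ × ℝ, Complex.exp ((t * (p.1 - p.2) : ℝ) * Complex.I) ∂μ.prod μ := by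
    simp_rw [charFun_apply_real, ← integral_prod_mul, ← Complex.exp_add]
    congr with p
    push_cast
    ring_nf
  have hint : Integrable (fun p : ℝ × ℝ => Complex.exp ((t * (p.1 - p.2) : ℝ) * Complex.I))
      (μ.prod μ) :=
    .of_bound (by fun_prop) 1 (ae_of_all _ fun p => (Complex.norm_exp_ofReal_mul_I _).le)
  calc ‖charFun μ t‖ ^ 2 = (charFun μ t * charFun μ (-t)).re := by
        rw [charFun_neg, Complex.mul_conj, Complex.normSq_eq_norm_sq]; norm_cast
    _ = _ := by
        rw [hprod]
        exact (integral_re hint).symm.trans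
          (integral_congr_ae (ae_of_all _ fun p => Complex.exp_ofReal_mul_I_re _))

lemma sq_div_four_le_one_sub_cos {x : ℝ} (hx : |x| ≤ 1) : x ^ 2 / 4 ≤ 1 - Real.cos x := by
  have hbound := abs_le.1 (Real.cos_bound hx)
  have hx4 : |x| ^ 4 ≤ x ^ 2 := by
    rw [show |x| ^ 4 = x ^ 2 * |x| ^ 2 by rw [← sq_abs x]; ring]
    exact mul_le_of_le_one_right (sq_nonneg x) (pow_le_one₀ (abs_nonneg x) hx)
  nlinarith [hbound.2]

-- `π` times the Fejér kernel of `ℝ`, `(1/2π) ∫_{-T}^{T} (1 - |s|/T) e^{isu} ds`.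
def fejerKernel (T u : ℝ) : ℝ := ∫ s in Ioc 0 T, (1 - s / T) * Real.cos (s * u)

lemma one_sub_div_mem_Icc {T s : ℝ} (hT : 0 < T) (hs : s ∈ Icc 0 T) : 1 - s / T ∈ Icc 0 1 :=
  ⟨sub_nonneg.2 ((div_le_one hT).2 hs.2), sub_le_self _ (div_nonneg hs.1 hT.le)⟩

lemma fejerKernel_zero {T : ℝ} (hT : 0 < T) : fejerKernel T 0 = T / 2 := by
  rw [fejerKernel, ← intervalIntegral.integral_of_le hT.le]
  have hderiv : ∀ s ∈ uIcc 0 T,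
      HasDerivAt (fun s => s - s ^ 2 / (2 * T)) ((1 - s / T) * Real.cos (s * 0)) s := by
    intro s _
    refine ((hasDerivAt_id s).sub ((hasDerivAt_pow 2 s).div_const (2 * T))).congr_deriv ?_
    simp only [mul_zero, Real.cos_zero]
    field_simp
    ring
  rw [intervalIntegral.integral_eq_sub_of_hasDerivAt hderiv
    (Continuous.intervalIntegrable (by fun_prop) _ _)]
  field_simp
  ring

lemma fejerKernel_of_ne_zero {T u : ℝ} (hT : 0 < T) (hu : u ≠ 0) :
    fejerKernel T u = (1 - Real.cos (T * u)) / (T * u ^ 2) := by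
  rw [fejerKernel, ← intervalIntegral.integral_of_le hT.le]
  have hderiv : ∀ s ∈ uIcc 0 T, HasDerivAt
      (fun s => (1 - s / T) * Real.sin (s * u) / u - Real.cos (s * u) / (T * u ^ 2))
      ((1 - s / T) * Real.cos (s * u)) s := by
    intro s _
    have hsin := (hasDerivAt_mul_const u (x := s)).sin
    have hcos := (hasDerivAt_mul_const u (x := s)).cos
    have hlin := ((hasDerivAt_id s).div_const T).const_sub 1
    refine (((hlin.mul hsin).div_const u).sub (hcos.div_const (T * u ^ 2))).congr_deriv ?_
    simp only [id]
    field_simp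
    ring
  rw [intervalIntegral.integral_eq_sub_of_hasDerivAt hderiv
    (Continuous.intervalIntegrable (by fun_prop) _ _)]
  field_simp
  simp only [sub_self, mul_zero, zero_mul, zero_sub, sub_zero, Real.sin_zero, Real.cos_zero,
    sub_neg_eq_add]
  ring

lemma fejerKernel_nonneg {T : ℝ} (hT : 0 < T) (u : ℝ) : 0 ≤ fejerKernel T u := by
  rcases eq_or_ne u 0 with rfl | hu
  · rw [fejerKernel_zero hT]; positivity
  · rw [fejerKernel_of_ne_zero hT hu]
    exact div_nonneg (sub_nonneg.2 (Real.cos_le_one _)) (by positivity)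

lemma div_four_le_fejerKernel {T u : ℝ} (hT : 0 < T) (hu : |T * u| ≤ 1) :
    T / 4 ≤ fejerKernel T u := by
  rcases eq_or_ne u 0 with rfl | hu0
  · rw [fejerKernel_zero hT]; linarith
  · rw [fejerKernel_of_ne_zero hT hu0, le_div_iff₀ (by positivity)]
    nlinarith [sq_div_four_le_one_sub_cos hu]

lemma integrable_fejerIntegrand (μ : Measure ℝ) [IsFiniteMeasure μ] {T : ℝ} (hT : 0 < T) :
    Integrable (Function.uncurry fun s (p : ℝ × ℝ) => (1 - s / T) * Real.cos (s * (p.1 - p.2)))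
      ((volume.restrict (Ioc 0 T)).prod (μ.prod μ)) := by
  refine .of_bound (by fun_prop) 1 ?_
  filter_upwards [Measure.quasiMeasurePreserving_fst.ae (ae_restrict_mem measurableSet_Ioc)]
    with z hz
  have hw := one_sub_div_mem_Icc hT (Ioc_subset_Icc_self hz)
  rw [Real.norm_eq_abs, Function.uncurry_apply_pair, abs_mul, abs_of_nonneg hw.1]
  exact mul_le_one₀ hw.2 (abs_nonneg _) (Real.abs_cos_le_one _)

lemma integrable_fejerKernel_comp_sub (μ : Measure ℝ) [IsFiniteMeasure μ] {T : ℝ} (hT : 0 < T) :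
    Integrable (fun p : ℝ × ℝ => fejerKernel T (p.1 - p.2)) (μ.prod μ) :=
  (integrable_fejerIntegrand μ hT).integral_prod_right

lemma setIntegral_one_sub_div_mul_sq_norm_measureFT (μ : Measure ℝ) [IsFiniteMeasure μ] {T : ℝ}
    (hT : 0 < T) :
    ∫ s in Ioc 0 T, (1 - s / T) * ‖measureFT μ s‖ ^ 2 =
      ∫ p, fejerKernel T (p.1 - p.2) ∂μ.prod μ := by
  have hcos (s : ℝ) : (1 - s / T) * ‖measureFT μ s‖ ^ 2 =
      ∫ p : ℝ × ℝ, (1 - s / T) * Real.cos (s * (p.1 - p.2)) ∂μ.prod μ := by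
    simp_rw [measureFT_eq_charFun, sq_norm_charFun_eq_integral_cos, neg_mul, Real.cos_neg,
      integral_const_mul]
  simp_rw [hcos]
  exact integral_integral_swap (integrable_fejerIntegrand μ hT)

lemma sq_measureReal_Icc_le_Wavg (μ : Measure ℝ) [IsFiniteMeasure μ] {T a b : ℝ} (hT : 0 < T)
    (hab : b - a ≤ T⁻¹) : μ.real (Icc a b) ^ 2 ≤ 4 * Wavg μ T := by
  have hkernel : ∀ p ∈ Icc a b ×ˢ Icc a b, T / 4 ≤ fejerKernel T (p.1 - p.2) := by
    rintro ⟨x, y⟩ ⟨hx, hy⟩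
    refine div_four_le_fejerKernel hT ?_
    rw [abs_mul, abs_of_pos hT, ← mul_inv_cancel₀ hT.ne']
    exact mul_le_mul_of_nonneg_left
      (abs_sub_le_iff.2 ⟨by linarith [hx.2, hy.1], by linarith [hx.1, hy.2]⟩ |>.trans hab) hT.le
  have hlower : T / 4 * μ.real (Icc a b) ^ 2 ≤ ∫ p, fejerKernel T (p.1 - p.2) ∂μ.prod μ :=
    calc T / 4 * μ.real (Icc a b) ^ 2 = T / 4 * (μ.prod μ).real (Icc a b ×ˢ Icc a b) := by
          rw [measureReal_prod_prod, sq]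
      _ ≤ ∫ p in Icc a b ×ˢ Icc a b, fejerKernel T (p.1 - p.2) ∂μ.prod μ :=
          setIntegral_ge_of_const_le_real (measurableSet_Icc.prod measurableSet_Icc)
            (measure_ne_top _ _) hkernel (integrable_fejerKernel_comp_sub μ hT).integrableOn
      _ ≤ ∫ p, fejerKernel T (p.1 - p.2) ∂μ.prod μ :=
          setIntegral_le_integral (integrable_fejerKernel_comp_sub μ hT)
            (ae_of_all _ fun _ => fejerKernel_nonneg hT _)
  have hupper : ∫ s in Ioc 0 T, (1 - s / T) * ‖measureFT μ s‖ ^ 2 ≤ T * Wavg μ T := by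
    rw [Wavg, ← mul_assoc, mul_one_div_cancel hT.ne', one_mul]
    refine setIntegral_mono_on ?_ ?_ measurableSet_Ioc fun s hs => ?_
    · exact (Continuous.integrableOn_Icc (by fun_prop)).mono_set Ioc_subset_Icc_self
    · exact (Continuous.integrableOn_Icc (by fun_prop)).mono_set Ioc_subset_Icc_self
    · exact mul_le_of_le_one_left (by positivity)
        (one_sub_div_mem_Icc hT (Ioc_subset_Icc_self hs)).2
  rw [setIntegral_one_sub_div_mul_sq_norm_measureFT μ hT] at hupper
  exact le_of_mul_le_mul_left (by linarith [hlower.trans hupper]) hT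

theorem stmt_1_general (α : ℝ) (μ : Measure ℝ) [IsFiniteMeasure μ]
    (C : ℝ) (hC : 0 < C) (h : ∀ t > (0 : ℝ), Wavg μ t < C * t ^ (-α)) :
    UnifHolder μ (α / 2) := by
  refine ⟨2 * √C, by positivity, fun a b hab _ => ?_⟩
  have hδ : 0 < b - a := sub_pos.2 hab
  have hW : Wavg μ (b - a)⁻¹ < C * (b - a) ^ α := by
    simpa only [Real.inv_rpow hδ.le, Real.rpow_neg hδ.le, inv_inv] using h _ (inv_pos.2 hδ)
  have hsq : μ.real (Icc a b) ^ 2 < (2 * √C * (b - a) ^ (α / 2)) ^ 2 :=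
    calc μ.real (Icc a b) ^ 2 ≤ 4 * Wavg μ (b - a)⁻¹ :=
          sq_measureReal_Icc_le_Wavg μ (inv_pos.2 hδ) (inv_inv _).ge
      _ < 4 * (C * (b - a) ^ α) := by linarith
      _ = (2 * √C * (b - a) ^ (α / 2)) ^ 2 := by
          rw [mul_pow, mul_pow, Real.sq_sqrt hC.le, ← Real.rpow_mul_natCast hδ.le]
          ring_nf
  rw [← ofReal_measureReal, ENNReal.ofReal_lt_ofReal_iff (by positivity)]
  exact lt_of_pow_lt_pow_left₀ 2 (by positivity) hsq

/-- If `W_μ(t) < C t^{-α}` for all `t > 0`, then `μ` is uniformly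
`(α/2)`-Hölder continuous. -/
theorem stmt_1 (α : ℝ) (hα : α ∈ Set.Icc (0 : ℝ) 1) (μ : Measure ℝ) [IsFiniteMeasure μ]
    (C : ℝ) (hC : 0 < C) (h : ∀ t > (0 : ℝ), Wavg μ t < C * t ^ (-α)) :
    UnifHolder μ (α / 2) :=
  stmt_1_general α μ C hC h
end
end

section
/- Let T be a bounded self-adjoint operator on a separable infinite-dimensional complex Hilbert space H with purely continuous spectrum, and let x ∈ σ(T). Then the set G(x) := {ψ ∈ H : d⁻_{μ_ψ^T}(x) = 0 and d⁺_{μ_ψ^T}(x) = ∞} is generic in H, i.e., it contains a dense G_δ subset of H. -/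
open MeasureTheory Filter Set Metric
open scoped ENNReal Topology Classical

noncomputable section

/-! Let `b_r` be the continuous plateau function equal to `1` on `[x - r, x + r]` and vanishing
outside `(x - 2r, x + 2r)`, so that `μ_ψ([x - r, x + r]) ≤ ‖b_r(T)ψ‖² ≤ μ_ψ((x - 2r, x + 2r))`.
For each `n`, the vectors with `‖b_ε(T)ψ‖² < εⁿ` for arbitrarily small `ε`, and those with
`(2ε)^{1/(n+1)} < ‖b_ε(T)ψ‖²` for arbitrarily small `ε`, form countable intersections of open
sets. Both are dense. Cutting off the spectral part of `ψ` near `x` moves `ψ` only a little,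
because `μ_ψ` has no atom at `x`. Adding a small multiple of a vector `b_ε(T)η ≠ 0`, which exists
because `x ∈ σ(T)`, makes the spectral mass near `x` large at scale `ε`. By Baire, the vectors
lying in all of these sets form a generic set, and for them `d⁻ = 0` and `d⁺ = ∞`. -/

def plateau (x r : ℝ) : C(ℝ, ℝ) :=
  ⟨fun y => max 0 (min 1 (2 - |y - x| / r)), by fun_prop⟩

section Plateau

variable {x r s y : ℝ}

lemma plateau_nonneg : 0 ≤ plateau x r y := le_max_left _ _

lemma plateau_le_one : plateau x r y ≤ 1 := max_le zero_le_one (min_le_left _ _)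

lemma plateau_eq_one (hr : 0 < r) (hy : y ∈ closedBall x r) : plateau x r y = 1 := by
  rw [mem_closedBall, Real.dist_eq] at hy
  have : 1 ≤ 2 - |y - x| / r := by linarith [(div_le_one hr).2 hy]
  simp [plateau, min_eq_left this]

lemma plateau_eq_zero (hr : 0 < r) (hy : y ∉ ball x (2 * r)) : plateau x r y = 0 := by
  rw [mem_ball, Real.dist_eq, not_lt] at hy
  have : 2 ≤ |y - x| / r := (le_div_iff₀ hr).2 (by linarith)
  simp [plateau, show 2 - |y - x| / r ≤ 0 by linarith]

lemma sq_plateau_le_one : plateau x r y ^ 2 ≤ 1 := pow_le_one₀ plateau_nonneg plateau_le_one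

lemma plateau_mul_plateau (hs : 0 < s) (h : 2 * s ≤ r) :
    plateau x r y * plateau x s y = plateau x s y := by
  by_cases hy : y ∈ ball x (2 * s)
  · rw [plateau_eq_one (hs.trans_le (by linarith)) (closedBall_subset_closedBall h
      (ball_subset_closedBall hy)), one_mul]
  · rw [plateau_eq_zero hs hy, mul_zero]

end Plateau

section Measure

variable {μ : Measure ℝ} [IsFiniteMeasure μ] {x r : ℝ}

lemma integrable_sq_plateau : Integrable (fun y => plateau x r y ^ 2) μ :=
  (integrable_const 1).mono' (by fun_prop) (ae_of_all _ fun _ => by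
    rw [Real.norm_of_nonneg (by positivity)]; exact sq_plateau_le_one)

lemma measureReal_closedBall_le_integral_sq_plateau (hr : 0 < r) :
    μ.real (closedBall x r) ≤ ∫ y, plateau x r y ^ 2 ∂μ := by
  rw [← integral_indicator_one measurableSet_closedBall]
  refine integral_mono ((integrable_const 1).indicator measurableSet_closedBall)
    integrable_sq_plateau fun y => ?_
  by_cases hy : y ∈ closedBall x r
  · simp [hy, plateau_eq_one hr hy]
  · rw [indicator_of_notMem hy]
    positivity

lemma integral_sq_plateau_le_measureReal_ball (hr : 0 < r) :
    ∫ y, plateau x r y ^ 2 ∂μ ≤ μ.real (ball x (2 * r)) := by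
  rw [← integral_indicator_one measurableSet_ball]
  refine integral_mono integrable_sq_plateau
    ((integrable_const 1).indicator measurableSet_ball) fun y => ?_
  by_cases hy : y ∈ ball x (2 * r)
  · simpa [hy] using sq_plateau_le_one
  · simp [hy, plateau_eq_zero hr hy]

lemma tendsto_measureReal_ball_zero (h0 : μ {x} = 0) :
    Tendsto (fun r => μ.real (ball x r)) (𝓝 0) (𝓝 0) := by
  have hcth : Tendsto (fun r => μ.real (cthickening r {x})) (𝓝 0) (𝓝 0) := by
    have := tendsto_measure_cthickening_of_isClosed (μ := μ) (s := {x})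
      ⟨1, one_pos, measure_ne_top _ _⟩ isClosed_singleton
    rw [h0] at this
    exact (ENNReal.tendsto_toReal ENNReal.zero_ne_top).comp this
  refine squeeze_zero (fun _ => measureReal_nonneg) (fun r => measureReal_mono ?_) hcth
  rw [← thickening_singleton]
  exact thickening_subset_cthickening r {x}

end Measure

section ScalingExponents

variable {μ : Measure ℝ} {x : ℝ}

lemma measure_ball_ne_zero_of_frequently_rpow_lt {α : ℝ}
    (h : ∃ᶠ ε in 𝓝[>] 0, ε ^ α < μ.real (ball x ε)) {ε : ℝ} (hε : 0 < ε) :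
    μ (ball x ε) ≠ 0 := by
  obtain ⟨ε', ⟨hε'0, hε'ε⟩, hlt⟩ := ((nhdsGT_basis 0).frequently_iff.1 h) ε hε
  refine fun h0 => (Real.rpow_pos_of_pos hε'0 α).not_ge (hlt.le.trans_eq ?_)
  rw [measureReal_def, measure_mono_null (ball_subset_ball hε'ε.le) h0, ENNReal.toReal_zero]

lemma dUp_eq_top_of_frequently [IsFiniteMeasure μ] (hpos : ∀ ε > 0, μ (ball x ε) ≠ 0)
    (h : ∀ n : ℕ, ∃ᶠ ε in 𝓝[>] 0, μ.real (ball x ε) < ε ^ n) : dUp μ x = ⊤ := by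
  rw [dUp, if_neg (by simpa using hpos), EReal.eq_top_iff_forall_lt]
  intro z
  obtain ⟨n, hn⟩ := exists_nat_gt z
  refine (EReal.coe_lt_coe_iff.2 hn).trans_le (le_limsup_of_frequently_le' ?_)
  refine ((h n).and_eventually (Ioo_mem_nhdsGT one_pos)).mono fun ε ⟨hlt, hε0, hε1⟩ => ?_
  have hμ : 0 < μ.real (ball x ε) := ENNReal.toReal_pos (hpos ε hε0) (measure_ne_top _ _)
  have hlog := Real.log_lt_log hμ hlt
  rw [Real.log_pow] at hlog
  rw [EReal.coe_le_coe_iff, le_div_iff_of_neg (Real.log_neg hε0 hε1)]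
  exact hlog.le

lemma dLow_eq_zero_of_frequently [IsFiniteMeasure μ] (h0 : μ {x} = 0)
    (h : ∀ n : ℕ, ∃ᶠ ε in 𝓝[>] 0, ε ^ (1 / ((n : ℝ) + 1)) < μ.real (ball x ε)) :
    dLow μ x = 0 := by
  rw [dLow, if_neg (by simpa using fun ε => measure_ball_ne_zero_of_frequently_rpow_lt (h 0))]
  refine le_antisymm (EReal.le_of_forall_lt_iff_le.1 fun z hz => ?_) (le_liminf_of_le ?_ ?_)
  · obtain ⟨n, hn⟩ := exists_nat_one_div_lt (EReal.coe_pos.1 hz)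
    refine liminf_le_of_frequently_le' (((h n).and_eventually (Ioo_mem_nhdsGT one_pos)).mono
      fun ε ⟨hlt, hε0, hε1⟩ => ?_)
    have hlog := Real.log_lt_log (Real.rpow_pos_of_pos hε0 _) hlt
    rw [Real.log_rpow hε0] at hlog
    have := mul_lt_mul_of_neg_right hn (Real.log_neg hε0 hε1)
    rw [EReal.coe_le_coe_iff, div_le_iff_of_neg (Real.log_neg hε0 hε1), ← measureReal_def]
    linarith
  · isBoundedDefault
  · have hsmall := (tendsto_measureReal_ball_zero h0).eventually (gt_mem_nhds one_pos)
    filter_upwards [nhdsWithin_le_nhds hsmall, Ioo_mem_nhdsGT one_pos] with ε hμ ⟨hε0, hε1⟩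
    exact EReal.coe_nonneg.2 (div_nonneg_of_nonpos
      (Real.log_nonpos measureReal_nonneg hμ.le) (Real.log_neg hε0 hε1).le)

end ScalingExponents

lemma eventually_residual_frequently_nhdsGT_zero {X : Type*} [TopologicalSpace X] [BaireSpace X]
    {P : ℝ → X → Prop} (hP : ∀ ε, IsOpen {x | P ε x})
    (hd : ∀ a > 0, Dense {x | ∃ ε ∈ Ioo 0 a, P ε x}) :
    ∀ᶠ x in residual X, ∃ᶠ ε in 𝓝[>] 0, P ε x := by
  have hk (k : ℕ) : ∀ᶠ x in residual X, ∃ ε ∈ Ioo 0 (1 / ((k : ℝ) + 1)), P ε x := by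
    refine residual_of_dense_open ?_ (hd _ (by positivity))
    simp_rw [ofPred_exists, ofPred_and]
    exact isOpen_iUnion fun ε => isOpen_const.inter (hP ε)
  filter_upwards [eventually_countable_forall.2 hk] with x hx
  refine (nhdsGT_basis 0).frequently_iff.2 fun a ha => ?_
  obtain ⟨k, hka⟩ := exists_nat_one_div_lt ha
  obtain ⟨ε, ⟨hε0, hεk⟩, hP⟩ := hx k
  exact ⟨ε, ⟨hε0, hεk.trans hka⟩, hP⟩

section Spectral

variable {H : Type*} [NormedAddCommGroup H] [InnerProductSpace ℂ H] [CompleteSpace H]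
  {T : H →L[ℂ] H} {ψ : H} {μ : Measure ℝ} {x r s : ℝ}

lemma IsSpectralMeasure.integral_sq (hμ : IsSpectralMeasure T ψ μ) (g : C(ℝ, ℝ)) :
    ∫ y, g y ^ 2 ∂μ = ‖cfc g T ψ‖ ^ 2 := by
  have hsq : cfc (⇑(g ^ 2)) T = cfc g T * cfc g T := by
    rw [← cfc_mul (g : ℝ → ℝ) g T]
    congr 1
    ext y
    simp [sq]
  rw [show (fun y => g y ^ 2) = ⇑(g ^ 2) by ext; simp, hμ.2.2, hsq, mul_apply_eq_comp,
    ← ContinuousLinearMap.adjoint_inner_left, IsSelfAdjoint.cfc.adjoint_eq]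
  exact inner_self_eq_norm_sq (𝕜 := ℂ) _

lemma IsSpectralMeasure.measureReal_closedBall_le (hμ : IsSpectralMeasure T ψ μ) (hr : 0 < r) :
    μ.real (closedBall x r) ≤ ‖cfc (plateau x r) T ψ‖ ^ 2 := by
  have := hμ.1
  exact hμ.integral_sq _ ▸ measureReal_closedBall_le_integral_sq_plateau hr

lemma IsSpectralMeasure.norm_sq_le_measureReal_ball (hμ : IsSpectralMeasure T ψ μ) (hr : 0 < r) :
    ‖cfc (plateau x r) T ψ‖ ^ 2 ≤ μ.real (ball x (2 * r)) := by
  have := hμ.1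
  exact hμ.integral_sq _ ▸ integral_sq_plateau_le_measureReal_ball hr

lemma IsSpectralMeasure.tendsto_cfc_plateau_apply (hμ : IsSpectralMeasure T ψ μ)
    (h0 : μ {x} = 0) : Tendsto (fun r => cfc (plateau x r) T ψ) (𝓝[>] 0) (𝓝 0) := by
  have := hμ.1
  have hball : Tendsto (fun r => μ.real (ball x (2 * r))) (𝓝 0) (𝓝 0) :=
    (tendsto_measureReal_ball_zero h0).comp ((continuous_const_mul 2).tendsto' 0 0 (mul_zero 2))
  rw [tendsto_zero_iff_norm_tendsto_zero]
  refine squeeze_zero' (Eventually.of_forall fun _ => norm_nonneg _) ?_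
    (by simpa using (hball.mono_left nhdsWithin_le_nhds).sqrt)
  filter_upwards [self_mem_nhdsWithin] with r hr
  exact Real.le_sqrt_of_sq_le (hμ.norm_sq_le_measureReal_ball hr)

lemma IsSpectralMeasure.frequently_measureReal_ball_lt (hμ : IsSpectralMeasure T ψ μ) {n : ℕ}
    (h : ∃ᶠ ε in 𝓝[>] 0, ‖cfc (plateau x ε) T ψ‖ ^ 2 < ε ^ n) :
    ∃ᶠ ε in 𝓝[>] 0, μ.real (ball x ε) < ε ^ n := by
  have := hμ.1
  refine h.mp (eventually_mem_nhdsWithin.mono fun ε hε hlt => lt_of_le_of_lt ?_ hlt)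
  exact (measureReal_mono ball_subset_closedBall).trans (hμ.measureReal_closedBall_le hε)

lemma IsSpectralMeasure.frequently_rpow_lt_measureReal_ball (hμ : IsSpectralMeasure T ψ μ)
    {α : ℝ} (h : ∃ᶠ ε in 𝓝[>] 0, (2 * ε) ^ α < ‖cfc (plateau x ε) T ψ‖ ^ 2) :
    ∃ᶠ ε in 𝓝[>] 0, ε ^ α < μ.real (ball x ε) := by
  have htwo : Tendsto (fun ε : ℝ => 2 * ε) (𝓝[>] 0) (𝓝[>] 0) :=
    tendsto_iff_comap.2 (comap_mulLeft_nhdsGT_zero two_pos).ge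
  refine htwo.frequently (h.mp (eventually_mem_nhdsWithin.mono fun ε hε hlt => ?_))
  exact hlt.trans_le (hμ.norm_sq_le_measureReal_ball hε)

lemma cfc_plateau_mul_cfc_plateau (hs : 0 < s) (h : 2 * s ≤ r) :
    cfc (plateau x r) T * cfc (plateau x s) T = cfc (plateau x s) T := by
  rw [← cfc_mul (plateau x r : ℝ → ℝ) (plateau x s) T]
  exact cfc_congr fun y _ => plateau_mul_plateau hs h

lemma cfc_plateau_ne_zero (hT : IsSelfAdjoint T) (hx : x ∈ spectrum ℝ T) (hr : 0 < r) :
    cfc (plateau x r) T ≠ 0 := by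
  intro h
  have := eqOn_of_cfc_eq_cfc (h.trans (cfc_zero ℝ T).symm) (by fun_prop) continuousOn_const
    hT hx
  simp [plateau_eq_one hr (mem_closedBall_self hr.le)] at this

lemma exists_norm_eq_cfc_plateau_apply_eq_self (hT : IsSelfAdjoint T) (hx : x ∈ spectrum ℝ T)
    (hr : 0 < r) {t : ℝ} (ht : 0 ≤ t) : ∃ ζ : H, ‖ζ‖ = t ∧ cfc (plateau x r) T ζ = ζ := by
  obtain ⟨η, hη⟩ := DFunLike.ne_iff.1 (cfc_plateau_ne_zero hT hx (half_pos hr))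
  set φ := cfc (plateau x (r / 2)) T η
  have hφ : 0 < ‖φ‖ := norm_pos_iff.2 hη
  refine ⟨((t / ‖φ‖ : ℝ) : ℂ) • φ, ?_, ?_⟩
  · rw [norm_smul, Complex.norm_real, Real.norm_of_nonneg (by positivity),
      div_mul_cancel₀ t hφ.ne']
  · rw [map_smul, ← mul_apply_eq_comp,
      cfc_plateau_mul_cfc_plateau (half_pos hr) (by linarith)]

lemma dense_setOf_exists_norm_cfc_plateau_sq_lt
    (hsmall : ∀ ψ : H, Tendsto (fun r => cfc (plateau x r) T ψ) (𝓝[>] 0) (𝓝 0))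
    (n : ℕ) {a : ℝ} (ha : 0 < a) :
    Dense {ψ : H | ∃ ε ∈ Ioo 0 a, ‖cfc (plateau x ε) T ψ‖ ^ 2 < ε ^ n} := by
  refine Metric.dense_iff.2 fun ψ ρ hρ => ?_
  obtain ⟨δ, hδψ, hδ⟩ :=
    (((hsmall ψ).eventually (ball_mem_nhds 0 hρ)).and self_mem_nhdsWithin).exists
  set ε := min (a / 2) (δ / 2)
  have hε : 0 < ε := lt_min (half_pos ha) (half_pos hδ)
  refine ⟨ψ - cfc (plateau x δ) T ψ, ?_, ε, ⟨hε, by linarith [min_le_left (a / 2) (δ / 2)]⟩, ?_⟩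
  · simpa [dist_eq_norm] using hδψ
  · have hcut : cfc (plateau x ε) T (ψ - cfc (plateau x δ) T ψ) = 0 := by
      rw [map_sub, ← mul_apply_eq_comp, (cfc_commute_cfc _ _ T).eq,
        cfc_plateau_mul_cfc_plateau hε (by linarith [min_le_right (a / 2) (δ / 2)]), sub_self]
    rw [hcut, norm_zero, zero_pow two_ne_zero]
    exact pow_pos hε n

lemma dense_setOf_exists_rpow_lt_norm_cfc_plateau_sq (hT : IsSelfAdjoint T)
    (hx : x ∈ spectrum ℝ T)
    (hsmall : ∀ ψ : H, Tendsto (fun r => cfc (plateau x r) T ψ) (𝓝[>] 0) (𝓝 0))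
    {α : ℝ} (hα : 0 < α) {a : ℝ} (ha : 0 < a) :
    Dense {ψ : H | ∃ ε ∈ Ioo 0 a, (2 * ε) ^ α < ‖cfc (plateau x ε) T ψ‖ ^ 2} := by
  refine Metric.dense_iff.2 fun ψ ρ hρ => ?_
  have hρ4 : 0 < ρ / 4 := by positivity
  have hrpow : Tendsto (fun ε : ℝ => (2 * ε) ^ α) (𝓝[>] 0) (𝓝 0) := by
    have hc : ContinuousAt (fun ε : ℝ => (2 * ε) ^ α) 0 :=
      (Real.continuousAt_rpow_const (2 * 0) α (Or.inr hα.le)).comp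
        (continuous_const_mul 2).continuousAt
    simpa [Real.zero_rpow hα.ne'] using hc.tendsto.mono_left nhdsWithin_le_nhds
  obtain ⟨ε, hεα, hεψ, hε⟩ := ((hrpow.eventually (gt_mem_nhds (pow_pos hρ4 2))).and
    (((tendsto_zero_iff_norm_tendsto_zero.1 (hsmall ψ)).eventually (gt_mem_nhds hρ4)).and
      (Ioo_mem_nhdsGT ha))).exists
  obtain ⟨ζ, hζ, hζfix⟩ :=
    exists_norm_eq_cfc_plateau_apply_eq_self hT hx hε.1 (by positivity : 0 ≤ ρ / 2)
  refine ⟨ψ + ζ, ?_, ε, hε, ?_⟩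
  · rw [mem_ball, dist_eq_norm, add_sub_cancel_left, hζ]
    linarith
  · have hfar : ρ / 4 < ‖cfc (plateau x ε) T (ψ + ζ)‖ := by
      have := norm_sub_le (cfc (plateau x ε) T ψ + ζ) (cfc (plateau x ε) T ψ)
      rw [add_sub_cancel_left, hζ] at this
      rw [map_add, hζfix]
      linarith
    exact hεα.trans (pow_lt_pow_left₀ hfar hρ4.le two_ne_zero)

end Spectral

theorem stmt_5_general {H : Type*} [NormedAddCommGroup H] [InnerProductSpace ℂ H] [CompleteSpace H]
    (T : H →L[ℂ] H) (hT : IsSelfAdjoint T)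
    (μm : H → Measure ℝ) (hμm : ∀ ψ : H, IsSpectralMeasure T ψ (μm ψ))
    (hcont : ∀ (ψ : H) (x : ℝ), μm ψ {x} = 0)
    (x : ℝ) (hx : x ∈ realSpectrum T) :
    Generic {ψ : H | dLow (μm ψ) x = 0 ∧ dUp (μm ψ) x = ⊤} := by
  have hxR : x ∈ spectrum ℝ T := by simpa using hT.spectrumRestricts.apply_mem hx
  have hsmall (ψ : H) := (hμm ψ).tendsto_cfc_plateau_apply (hcont ψ x)
  have hthin (n : ℕ) := eventually_residual_frequently_nhdsGT_zero
    (fun _ => isOpen_lt (by fun_prop) continuous_const)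
    (fun _ => dense_setOf_exists_norm_cfc_plateau_sq_lt hsmall n)
  have hfat (n : ℕ) := eventually_residual_frequently_nhdsGT_zero
    (fun _ => isOpen_lt continuous_const (by fun_prop))
    (fun _ => dense_setOf_exists_rpow_lt_norm_cfc_plateau_sq hT hxR hsmall
      (α := 1 / ((n : ℝ) + 1)) (by positivity))
  refine mem_residual.1 ?_
  filter_upwards [eventually_countable_forall.2 hthin, eventually_countable_forall.2 hfat]
    with ψ hthinψ hfatψ
  have := (hμm ψ).1
  have hlow n := (hμm ψ).frequently_rpow_lt_measureReal_ball (hfatψ n)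
  exact ⟨dLow_eq_zero_of_frequently (hcont ψ x) hlow,
    dUp_eq_top_of_frequently (fun _ => measure_ball_ne_zero_of_frequently_rpow_lt (hlow 0))
      fun n => (hμm ψ).frequently_measureReal_ball_lt (hthinψ n)⟩

/-- For a bounded self-adjoint operator with purely continuous spectrum
and `x ∈ σ(T)`, the set `G(x) = {ψ | d⁻_{μ_ψ}(x) = 0 and d⁺_{μ_ψ}(x) = ∞}` is generic. -/
theorem stmt_5 {H : Type*} [NormedAddCommGroup H] [InnerProductSpace ℂ H] [CompleteSpace H]
    [TopologicalSpace.SeparableSpace H] (hinf : ¬ FiniteDimensional ℂ H)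
    (T : H →L[ℂ] H) (hT : IsSelfAdjoint T)
    (μm : H → Measure ℝ) (hμm : ∀ ψ : H, IsSpectralMeasure T ψ (μm ψ))
    (hcont : ∀ (ψ : H) (x : ℝ), μm ψ {x} = 0)
    (x : ℝ) (hx : x ∈ realSpectrum T) :
    Generic {ψ : H | dLow (μm ψ) x = 0 ∧ dUp (μm ψ) x = ⊤} :=
  stmt_5_general T hT μm hμm hcont x hx
end
end

section
/- Let T be a bounded self-adjoint operator on a separable infinite-dimensional complex Hilbert space H, let (x_n) be a dense sequence in σ(T), and suppose ψ ∈ H is nonzero and satisfies d⁻_{μ_ψ^T}(x_n) = 0 and d⁺_{μ_ψ^T}(x_n) = ∞ for every n. Then the set J_ψ := {x ∈ σ(T) : d⁺_{μ_ψ^T}(x) = ∞ and d⁻_{μ_ψ^T}(x) = 0} is generic in σ(T), i.e., it contains a dense G_δ subset of σ(T) (with the subspace topology from ℝ). -/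
/-!
For any measure that is finite on compact sets, both `{x | d⁻(x) = 0}` and `{x | d⁺(x) = ∞}` are
`G_δ`: each is a countable intersection of conditions "`ε^a < μ(B(x;ε))` (resp.
`μ(B̄(x;ε)) < ε^n`) for arbitrarily small `ε`", and for fixed `ε` these conditions define open
sets because `x ↦ μ(B(x;ε))` is lower and `x ↦ μ(B̄(x;ε))` upper semicontinuous. Their
intersection contains the dense sequence `(x_n)`, so it is a dense `G_δ` subset of `σ(T)`.
-/

open MeasureTheory Filter Set Metric
open scoped ENNReal Topology Classical

noncomputable section

section MeasureOfBalls

variable {α : Type*} [PseudoMetricSpace α] [MeasurableSpace α] (μ : Measure α)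

theorem lowerSemicontinuous_measure_ball (r : ℝ) :
    LowerSemicontinuous fun x => μ (ball x r) := by
  intro x c (hc : c < μ (ball x r))
  obtain ⟨u, hu_mono, hu_lt, hu⟩ := exists_seq_strictMono_tendsto r
  have hunion : ⋃ n, ball x (u n) = ball x r :=
    subset_antisymm (iUnion_subset fun n => ball_subset_ball (hu_lt n).le) fun y hy =>
      mem_iUnion.2 (hu.eventually (lt_mem_nhds (mem_ball.1 hy))).exists
  have hlim := tendsto_measure_iUnion_atTop (μ := μ) (s := fun n => ball x (u n))
    fun m n hmn => ball_subset_ball (hu_mono.monotone hmn)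
  rw [hunion] at hlim
  obtain ⟨n, hn⟩ := (hlim.eventually_const_lt hc).exists
  filter_upwards [ball_mem_nhds x (sub_pos.2 (hu_lt n))] with y hy
  refine hn.trans_le (measure_mono (ball_subset_ball' ?_))
  rw [dist_comm]
  linarith [mem_ball.1 hy]

theorem upperSemicontinuous_measure_closedBall [OpensMeasurableSpace α] [ProperSpace α]
    [IsFiniteMeasureOnCompacts μ] (r : ℝ) : UpperSemicontinuous fun x => μ (closedBall x r) := by
  intro x c hc
  have hlim := tendsto_measure_biInter_gt (μ := μ) (s := closedBall x) (a := r)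
    (fun _ _ => measurableSet_closedBall.nullMeasurableSet)
    (fun _ _ _ hij => closedBall_subset_closedBall hij)
    ⟨r + 1, by linarith, measure_closedBall_lt_top.ne⟩
  rw [biInter_gt_closedBall] at hlim
  obtain ⟨r', hr'c, hr'⟩ := ((hlim.eventually_lt_const hc).and self_mem_nhdsWithin).exists
  filter_upwards [ball_mem_nhds x (sub_pos.2 (mem_Ioi.1 hr'))] with y hy
  refine (measure_mono (closedBall_subset_closedBall' ?_)).trans_lt hr'c
  linarith [mem_ball.1 hy]

theorem frequently_measure_closedBall_lt_pow {x : α} {n : ℕ}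
    (h : ∃ᶠ ε in 𝓝[>] 0, μ (ball x ε) < ENNReal.ofReal (ε ^ (2 * n))) :
    ∃ᶠ ε in 𝓝[>] 0, μ (closedBall x ε) < ENNReal.ofReal (ε ^ n) := by
  have hhalf : Tendsto (fun ε : ℝ => ε / 2) (𝓝[>] 0) (𝓝[>] 0) := by
    refine tendsto_nhdsWithin_iff.2
      ⟨?_, eventually_nhdsWithin_of_forall fun ε (hε : 0 < ε) => half_pos hε⟩
    simpa using ((continuous_id.div_const (2 : ℝ)).tendsto 0).mono_left nhdsWithin_le_nhds
  refine hhalf.frequently ((h.and_eventually (Ioo_mem_nhdsGT one_half_pos)).mono ?_)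
  rintro ε ⟨hμε, hε0, hε⟩
  calc μ (closedBall x (ε / 2)) ≤ μ (ball x ε) :=
        measure_mono (closedBall_subset_ball (half_lt_self hε0))
    _ < ENNReal.ofReal (ε ^ (2 * n)) := hμε
    _ ≤ ENNReal.ofReal ((ε / 2) ^ n) := by
        refine ENNReal.ofReal_le_ofReal ?_
        rw [pow_mul]
        exact pow_le_pow_left₀ (sq_nonneg ε) (by nlinarith) n

end MeasureOfBalls

theorem isGδ_setOf_frequently {ι X : Type*} [TopologicalSpace X] {l : Filter ι}
    [l.IsCountablyGenerated] {U : ι → Set X} (hU : ∀ i, IsOpen (U i)) :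
    IsGδ {x | ∃ᶠ i in l, x ∈ U i} := by
  obtain ⟨s, hs⟩ := l.exists_antitone_basis
  have hset : {x | ∃ᶠ i in l, x ∈ U i} = ⋂ n, ⋃ i ∈ s n, U i := by
    ext x
    simp [hs.1.frequently_iff]
  rw [hset]
  exact .iInter fun n => (isOpen_biUnion fun i _ => hU i).isGδ

def scalingRatio (μ : Measure ℝ) (x ε : ℝ) : ℝ :=
  Real.log (μ (ball x ε)).toReal / Real.log ε

section ScalingExponents

variable {μ : Measure ℝ} [IsFiniteMeasureOnCompacts μ] {x ε : ℝ}

theorem scalingRatio_lt_iff (hε : ε ∈ Ioo 0 1) (hμ : μ (ball x ε) ≠ 0) (a : ℝ) :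
    scalingRatio μ x ε < a ↔ ENNReal.ofReal (ε ^ a) < μ (ball x ε) := by
  have hm : 0 < (μ (ball x ε)).toReal := ENNReal.toReal_pos hμ measure_ball_lt_top.ne
  rw [scalingRatio, div_lt_iff_of_neg (Real.log_neg hε.1 hε.2), ← Real.log_rpow hε.1,
    Real.log_lt_log_iff (Real.rpow_pos_of_pos hε.1 a) hm,
    ENNReal.ofReal_lt_iff_lt_toReal (Real.rpow_nonneg hε.1.le a) measure_ball_lt_top.ne]

theorem lt_scalingRatio_iff (hε : ε ∈ Ioo 0 1) (hμ : μ (ball x ε) ≠ 0) (a : ℝ) :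
    a < scalingRatio μ x ε ↔ μ (ball x ε) < ENNReal.ofReal (ε ^ a) := by
  have hm : 0 < (μ (ball x ε)).toReal := ENNReal.toReal_pos hμ measure_ball_lt_top.ne
  rw [scalingRatio, lt_div_iff_of_neg (Real.log_neg hε.1 hε.2), ← Real.log_rpow hε.1,
    Real.log_lt_log_iff hm (Real.rpow_pos_of_pos hε.1 a),
    ENNReal.lt_ofReal_iff_toReal_lt measure_ball_lt_top.ne]

/-- Since `μ(B(x;ε)) ≤ μ(B(x;1))` for `ε < 1`, the ratio is eventually at least
`ln μ(B(x;1)) / ln ε`, which tends to `0`. -/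
theorem zero_le_liminf_scalingRatio (hpos : ∀ ε > 0, μ (ball x ε) ≠ 0) :
    0 ≤ liminf (fun ε => (scalingRatio μ x ε : EReal)) (𝓝[>] 0) := by
  set C := (μ (ball x 1)).toReal
  have hC : 0 < C := ENNReal.toReal_pos (hpos 1 one_pos) measure_ball_lt_top.ne
  have hlim : Tendsto (fun ε => ((Real.log C / Real.log ε : ℝ) : EReal)) (𝓝[>] 0) (𝓝 0) :=
    EReal.tendsto_coe.2 (tendsto_const_nhds.div_atBot Real.tendsto_log_nhdsGT_zero)
  rw [← hlim.liminf_eq]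
  refine liminf_le_liminf ?_
  filter_upwards [Ioo_mem_nhdsGT one_pos] with ε hε
  have hm : 0 < (μ (ball x ε)).toReal :=
    ENNReal.toReal_pos (hpos ε hε.1) measure_ball_lt_top.ne
  have hmC : (μ (ball x ε)).toReal ≤ C :=
    ENNReal.toReal_mono measure_ball_lt_top.ne (measure_mono (ball_subset_ball hε.2.le))
  exact EReal.coe_le_coe_iff.2 <| div_le_div_of_nonpos_of_le (Real.log_neg hε.1 hε.2).le
    (Real.log_le_log hm hmC)

theorem frequently_scalingRatio_lt_iff (hpos : ∀ ε > 0, μ (ball x ε) ≠ 0) (a : ℝ) :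
    (∃ᶠ ε in 𝓝[>] 0, (scalingRatio μ x ε : EReal) < a) ↔
      ∃ᶠ ε in 𝓝[>] 0, ENNReal.ofReal (ε ^ a) < μ (ball x ε) := by
  refine frequently_congr ?_
  filter_upwards [Ioo_mem_nhdsGT one_pos] with ε hε
  rw [EReal.coe_lt_coe_iff, scalingRatio_lt_iff hε (hpos ε hε.1)]

theorem frequently_lt_scalingRatio_iff (hpos : ∀ ε > 0, μ (ball x ε) ≠ 0) (a : ℝ) :
    (∃ᶠ ε in 𝓝[>] 0, (a : EReal) < scalingRatio μ x ε) ↔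
      ∃ᶠ ε in 𝓝[>] 0, μ (ball x ε) < ENNReal.ofReal (ε ^ a) := by
  refine frequently_congr ?_
  filter_upwards [Ioo_mem_nhdsGT one_pos] with ε hε
  rw [EReal.coe_lt_coe_iff, lt_scalingRatio_iff hε (hpos ε hε.1)]

theorem dLow_eq_zero_iff :
    dLow μ x = 0 ↔
      ∀ n : ℕ, ∃ᶠ ε in 𝓝[>] 0, ENNReal.ofReal (ε ^ (1 / (n + 1 : ℝ))) < μ (ball x ε) := by
  by_cases hnull : ∃ ε > 0, μ (ball x ε) = 0
  · obtain ⟨ε₀, hε₀, hμ₀⟩ := hnull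
    rw [dLow, if_pos ⟨ε₀, hε₀, hμ₀⟩]
    refine ⟨fun h => absurd h EReal.top_ne_zero, fun h => ?_⟩
    obtain ⟨ε, hlt, hε⟩ := ((h 0).and_eventually (Ioo_mem_nhdsGT hε₀)).exists
    rw [measure_mono_null (ball_subset_ball hε.2.le) hμ₀] at hlt
    exact absurd hlt ENNReal.not_lt_zero
  push Not at hnull
  rw [dLow, if_neg (by simpa using hnull)]
  simp_rw [← frequently_scalingRatio_lt_iff hnull]
  constructor
  · intro h n
    refine frequently_lt_of_liminf_lt (by isBoundedDefault) (h ▸ ?_)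
    exact EReal.coe_pos.2 Nat.one_div_pos_of_nat
  · intro h
    refine le_antisymm (EReal.le_of_forall_lt_iff_le.1 fun z hz => ?_)
      (zero_le_liminf_scalingRatio hnull)
    obtain ⟨n, hn⟩ := exists_nat_one_div_lt (EReal.coe_pos.1 hz)
    exact liminf_le_of_frequently_le ((h n).mono fun ε hε =>
      hε.le.trans (EReal.coe_le_coe_iff.2 hn.le))

theorem dUp_eq_top_iff :
    dUp μ x = ⊤ ↔ ∀ n : ℕ, ∃ᶠ ε in 𝓝[>] 0, μ (ball x ε) < ENNReal.ofReal (ε ^ n) := by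
  by_cases hnull : ∃ ε > 0, μ (ball x ε) = 0
  · obtain ⟨ε₀, hε₀, hμ₀⟩ := hnull
    rw [dUp, if_pos ⟨ε₀, hε₀, hμ₀⟩]
    refine iff_of_true rfl fun n => Eventually.frequently ?_
    filter_upwards [Ioo_mem_nhdsGT hε₀] with ε hε
    rw [measure_mono_null (ball_subset_ball hε.2.le) hμ₀]
    exact ENNReal.ofReal_pos.2 (pow_pos hε.1 n)
  push Not at hnull
  rw [dUp, if_neg (by simpa using hnull), EReal.eq_top_iff_forall_lt]
  have hfreq (n : ℕ) := frequently_lt_scalingRatio_iff hnull n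
  simp only [Real.rpow_natCast] at hfreq
  refine ⟨fun h n => (hfreq n).1 (frequently_lt_of_lt_limsup (by isBoundedDefault) (h n)),
    fun h y => ?_⟩
  obtain ⟨n, hn⟩ := exists_nat_gt y
  refine (EReal.coe_lt_coe_iff.2 hn).trans_le (le_limsup_of_frequently_le ?_)
  exact ((hfreq n).2 (h n)).mono fun ε hε => hε.le

end ScalingExponents

theorem isGδ_setOf_dLow_eq_zero (μ : Measure ℝ) [IsFiniteMeasureOnCompacts μ] :
    IsGδ {x | dLow μ x = 0} := by
  simp_rw [dLow_eq_zero_iff, ofPred_forall]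
  exact .iInter fun n => isGδ_setOf_frequently
    (U := fun ε => {x | ENNReal.ofReal (ε ^ (1 / (n + 1 : ℝ))) < μ (ball x ε)})
    fun ε => (lowerSemicontinuous_measure_ball μ ε).isOpen_preimage _

/-- Measures of open balls are not upper semicontinuous, so the condition is first moved to
closed balls. -/
theorem isGδ_setOf_dUp_eq_top (μ : Measure ℝ) [IsFiniteMeasureOnCompacts μ] :
    IsGδ {x | dUp μ x = ⊤} := by
  have hset : {x | dUp μ x = ⊤} =
      ⋂ n : ℕ, {x | ∃ᶠ ε in 𝓝[>] 0, μ (closedBall x ε) < ENNReal.ofReal (ε ^ n)} := by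
    ext x
    simp only [mem_ofPred_eq, mem_iInter, dUp_eq_top_iff]
    exact ⟨fun h n => frequently_measure_closedBall_lt_pow μ (h (2 * n)),
      fun h n => (h n).mono fun ε hε => (measure_mono ball_subset_closedBall).trans_lt hε⟩
  rw [hset]
  exact .iInter fun n => isGδ_setOf_frequently
    (U := fun ε => {x | μ (closedBall x ε) < ENNReal.ofReal (ε ^ n)})
    fun ε => (upperSemicontinuous_measure_closedBall μ ε).isOpen_preimage _

theorem stmt_7_general {H : Type*} [NormedAddCommGroup H] [InnerProductSpace ℂ H] [CompleteSpace H]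
    (T : H →L[ℂ] H)
    (μm : H → Measure ℝ) (hμm : ∀ ψ : H, IsSpectralMeasure T ψ (μm ψ))
    (xs : ℕ → realSpectrum T) (hdense : DenseRange xs)
    (ψ : H)
    (hxs : ∀ n : ℕ, dLow (μm ψ) (xs n : ℝ) = 0 ∧ dUp (μm ψ) (xs n : ℝ) = ⊤) :
    Generic {x : realSpectrum T | dUp (μm ψ) (x : ℝ) = ⊤ ∧ dLow (μm ψ) (x : ℝ) = 0} := by
  have : IsFiniteMeasure (μm ψ) := (hμm ψ).1
  refine ⟨_, subset_rfl, ((isGδ_setOf_dUp_eq_top _).inter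
    (isGδ_setOf_dLow_eq_zero _)).preimage continuous_subtype_val, hdense.mono ?_⟩
  rintro _ ⟨n, rfl⟩
  exact ⟨(hxs n).2, (hxs n).1⟩

/-- If `(x_n)` is dense in `σ(T)` and `ψ ≠ 0` satisfies
`d⁻_{μ_ψ}(x_n) = 0` and `d⁺_{μ_ψ}(x_n) = ∞` for every `n`, then `J_ψ` is generic in `σ(T)`. -/
theorem stmt_7 {H : Type*} [NormedAddCommGroup H] [InnerProductSpace ℂ H] [CompleteSpace H]
    [TopologicalSpace.SeparableSpace H] (hinf : ¬ FiniteDimensional ℂ H)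
    (T : H →L[ℂ] H) (hT : IsSelfAdjoint T)
    (μm : H → Measure ℝ) (hμm : ∀ ψ : H, IsSpectralMeasure T ψ (μm ψ))
    (xs : ℕ → realSpectrum T) (hdense : DenseRange xs)
    (ψ : H) (hψ : ψ ≠ 0)
    (hxs : ∀ n : ℕ, dLow (μm ψ) (xs n : ℝ) = 0 ∧ dUp (μm ψ) (xs n : ℝ) = ⊤) :
    Generic {x : realSpectrum T | dUp (μm ψ) (x : ℝ) = ⊤ ∧ dLow (μm ψ) (x : ℝ) = 0} :=
  stmt_7_general T μm hμm xs hdense ψ hxs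
end
end

section
/- Let T be a bounded self-adjoint operator on a separable infinite-dimensional complex Hilbert space H and let x ∈ σ(T). Then there exists η ∈ H such that d⁻_{μ_η^T}(x) = 0. -/
open MeasureTheory Filter Set Metric
open scoped ENNReal Topology Classical

noncomputable section

/-! At every scale `ε`, the tent `tent x ε` (value `1` at `x`, support `B(x;ε)`) gives an
operator `cfc (tent x ε) T` of norm at least `1` when `x ∈ σ(T)`, and
`‖cfc (tent x ε) T η‖² = ∫ tent² dμ_η ≤ μ_η(B(x;ε))`. Moving any vector by a small amount
therefore produces one with `μ_η(B(x;ε)) > ε^δ` at some scale `ε < δ`, and this is an open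
condition in `η`. By Baire's theorem some `η` satisfies it for every `δ = 1/(n+1)`, which forces
`d⁻_{μ_η}(x) ≤ 0`; the bound `d⁻_μ(x) ≥ 0` holds for every finite measure. -/

lemma log_div_log_le_of_rpow_le {ε δ m : ℝ} (hε₀ : 0 < ε) (hε₁ : ε < 1) (h : ε ^ δ ≤ m) :
    Real.log m / Real.log ε ≤ δ := by
  have hlog : Real.log ε < 0 := Real.log_neg hε₀ hε₁
  rw [div_le_iff_of_neg hlog, ← Real.log_rpow hε₀]
  exact Real.log_le_log (Real.rpow_pos_of_pos hε₀ δ) h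

lemma zero_le_liminf_log_measure_ball_div_log (μ : Measure ℝ) [IsFiniteMeasure μ] (x : ℝ) :
    (0 : EReal) ≤ liminf
      (fun ε : ℝ => ((Real.log (μ (ball x ε)).toReal / Real.log ε : ℝ) : EReal)) (𝓝[>] 0) := by
  set M : ℝ := max 1 μ.real univ
  have hM : 0 ≤ Real.log M := Real.log_nonneg (le_max_left _ _)
  have hball (ε : ℝ) : Real.log (μ (ball x ε)).toReal ≤ Real.log M := by
    rcases (measureReal_nonneg (μ := μ) (s := ball x ε)).eq_or_lt with h0 | hpos
    · rw [← measureReal_def, ← h0, Real.log_zero]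
      exact hM
    · exact Real.log_le_log hpos ((measureReal_mono (subset_univ _)).trans (le_max_right _ _))
  have hlim : Tendsto (fun ε => Real.log M / Real.log ε) (𝓝[>] 0) (𝓝 0) :=
    tendsto_const_nhds.div_atBot Real.tendsto_log_nhdsGT_zero
  refine EReal.ge_of_forall_gt_iff_ge.1 fun z hz => le_liminf_of_le (by isBoundedDefault) ?_
  filter_upwards [hlim.eventually (lt_mem_nhds (EReal.coe_lt_coe_iff.1 hz)),
    Ioo_mem_nhdsGT zero_lt_one] with ε hzε hε
  have hlog : Real.log ε ≤ 0 := Real.log_nonpos hε.1.le hε.2.le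
  exact EReal.coe_le_coe_iff.2 (hzε.le.trans (div_le_div_of_nonpos_of_le hlog (hball ε)))

lemma dLow_eq_zero_of_forall_exists_rpow_le (μ : Measure ℝ) [IsFiniteMeasure μ] {x : ℝ}
    (h : ∀ n : ℕ, ∃ ε ∈ Ioo (0 : ℝ) (1 / (n + 1)),
      ε ^ (1 / (n + 1) : ℝ) ≤ (μ (ball x ε)).toReal) :
    dLow μ x = 0 := by
  have hpos : ¬ ∃ ρ > (0 : ℝ), μ (ball x ρ) = 0 := by
    rintro ⟨ρ, hρ, hzero⟩
    obtain ⟨n, hn⟩ := exists_nat_one_div_lt hρ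
    obtain ⟨ε, hε, hle⟩ := h n
    rw [measure_mono_null (ball_subset_ball (hε.2.trans hn).le) hzero,
      ENNReal.toReal_zero] at hle
    exact (Real.rpow_pos_of_pos hε.1 _).not_ge hle
  rw [dLow, if_neg hpos]
  refine le_antisymm ?_ (zero_le_liminf_log_measure_ball_div_log μ x)
  refine EReal.le_of_forall_lt_iff_le.1 fun z hz => liminf_le_of_frequently_le' ?_
  rw [(nhdsGT_basis 0).frequently_iff]
  intro ρ hρ
  obtain ⟨n, hn⟩ := exists_nat_one_div_lt (lt_min hρ (EReal.coe_lt_coe_iff.1 hz))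
  obtain ⟨ε, hε, hle⟩ := h n
  have hn₁ : 1 / ((n : ℝ) + 1) ≤ 1 := div_le_one_of_le₀ (by linarith [n.cast_nonneg (α := ℝ)])
    (by positivity)
  refine ⟨ε, ⟨hε.1, hε.2.trans (hn.trans_le (min_le_left _ _))⟩, EReal.coe_le_coe_iff.2 ?_⟩
  exact (log_div_log_le_of_rpow_le hε.1 (hε.2.trans_le hn₁) hle).trans
    (hn.trans_le (min_le_right _ _)).le

def tent (x ε t : ℝ) : ℝ := max 0 (1 - |t - x| / ε)

lemma continuous_tent (x ε : ℝ) : Continuous (tent x ε) := by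
  unfold tent
  fun_prop

lemma tent_self (x ε : ℝ) : tent x ε x = 1 := by
  simp [tent]

lemma tent_sq_le_indicator_ball {x ε : ℝ} (hε : 0 < ε) (t : ℝ) :
    tent x ε t ^ 2 ≤ (ball x ε).indicator 1 t := by
  by_cases ht : t ∈ ball x ε
  · rw [indicator_of_mem ht, Pi.one_apply]
    have hdiv : 0 ≤ |t - x| / ε := by positivity
    exact pow_le_one₀ (le_max_left _ _) (max_le zero_le_one (by linarith))
  · rw [indicator_of_notMem ht]
    rw [mem_ball, Real.dist_eq, not_lt] at ht
    have hdiv : 1 ≤ |t - x| / ε := (one_le_div hε).2 ht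
    simp [tent, max_eq_left (by linarith : 1 - |t - x| / ε ≤ 0)]

section SpectralMeasure

variable {H : Type*} [NormedAddCommGroup H] [InnerProductSpace ℂ H] [CompleteSpace H]
  {T : H →L[ℂ] H} {ψ : H} {μ : Measure ℝ}

lemma IsSpectralMeasure.integral_sq_eq_norm_cfc_apply_sq (hμ : IsSpectralMeasure T ψ μ)
    {g : ℝ → ℝ} (hg : Continuous g) :
    ∫ t, g t ^ 2 ∂μ = ‖cfc g T ψ‖ ^ 2 := by
  have hsa : IsSelfAdjoint (cfc g T) := cfc_predicate g T
  have hsq : cfc (fun t => g t ^ 2) T = cfc g T * cfc g T := by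
    simp_rw [sq]
    exact cfc_mul g g T
  have hint := hμ.2.2 ⟨fun t => g t ^ 2, by fun_prop⟩
  rw [ContinuousMap.coe_mk] at hint
  rw [hint, hsq, mul_apply_eq_comp, ← ContinuousLinearMap.adjoint_inner_left, hsa.adjoint_eq]
  exact inner_self_eq_norm_sq (𝕜 := ℂ) _

lemma IsSpectralMeasure.norm_cfc_tent_apply_sq_le (hμ : IsSpectralMeasure T ψ μ) (x : ℝ)
    {ε : ℝ} (hε : 0 < ε) :
    ‖cfc (tent x ε) T ψ‖ ^ 2 ≤ (μ (ball x ε)).toReal := by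
  have := hμ.1
  rw [← hμ.integral_sq_eq_norm_cfc_apply_sq (continuous_tent x ε), ← measureReal_def,
    ← integral_indicator_one measurableSet_ball]
  exact integral_mono_of_nonneg (ae_of_all _ fun t => sq_nonneg _)
    ((integrable_const 1).indicator measurableSet_ball)
    (ae_of_all _ (tent_sq_le_indicator_ball hε))

end SpectralMeasure

lemma ContinuousLinearMap.exists_norm_lt_lt_norm_apply_add {𝕜 E F : Type*} [RCLike 𝕜]
    [NormedAddCommGroup E] [NormedSpace 𝕜 E] [NormedAddCommGroup F] [NormedSpace 𝕜 F]
    (A : E →L[𝕜] F) (w : E) {r c : ℝ} (hr : 0 < r) (hc : c < ‖A‖) :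
    ∃ v, ‖v‖ < r ∧ c * r < ‖A (w + v)‖ := by
  obtain ⟨u₀, hu₀, hAu₀⟩ := A.exists_lt_apply_of_lt_opNorm hc
  set u : E := (r : 𝕜) • u₀
  have hu : ‖u‖ < r := by
    rw [norm_smul, RCLike.norm_ofReal, abs_of_pos hr]
    nlinarith
  have hAu : c * r < ‖A u‖ := by
    rw [map_smul, norm_smul, RCLike.norm_ofReal, abs_of_pos hr]
    nlinarith
  -- `2 A u = A (w + u) - A (w - u)`, so one of `w ± u` is mapped to norm at least `‖A u‖`.
  have htwo : 2 * ‖A u‖ ≤ ‖A (w + u)‖ + ‖A (w + -u)‖ := by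
    calc 2 * ‖A u‖ = ‖(2 : 𝕜) • A u‖ := by rw [norm_smul, RCLike.norm_two]
      _ = ‖A (w + u) - A (w + -u)‖ := by
          rw [map_add, map_add, map_neg, two_smul]
          abel_nf
      _ ≤ ‖A (w + u)‖ + ‖A (w + -u)‖ := norm_sub_le _ _
  by_cases hplus : ‖A u‖ ≤ ‖A (w + u)‖
  · exact ⟨u, hu, hAu.trans_le hplus⟩
  · exact ⟨-u, by rwa [norm_neg], hAu.trans_le (by linarith)⟩

section Baire

variable {H : Type*} [NormedAddCommGroup H] [InnerProductSpace ℂ H] [CompleteSpace H]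

def concentratedAt (T : H →L[ℂ] H) (x δ : ℝ) : Set H :=
  ⋃ ε ∈ Ioo 0 δ, {η | ε ^ δ < ‖cfc (tent x ε) T η‖ ^ 2}

lemma isOpen_concentratedAt (T : H →L[ℂ] H) (x δ : ℝ) : IsOpen (concentratedAt T x δ) :=
  isOpen_biUnion fun _ _ => isOpen_lt continuous_const (by fun_prop)

lemma dense_concentratedAt {T : H →L[ℂ] H} (hT : IsSelfAdjoint T) {x : ℝ}
    (hx : x ∈ spectrum ℝ T) {δ : ℝ} (hδ : 0 < δ) :
    Dense (concentratedAt T x δ) := by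
  refine Metric.dense_iff.2 fun w r hr => ?_
  have hpow : Tendsto (fun ε : ℝ => ε ^ δ) (𝓝[>] 0) (𝓝 0) := by
    have := (Real.continuousAt_rpow_const 0 δ (Or.inr hδ.le)).tendsto
    rw [Real.zero_rpow hδ.ne'] at this
    exact this.mono_left nhdsWithin_le_nhds
  obtain ⟨ε, hε, hεδ⟩ := ((hpow.eventually
    (gt_mem_nhds (by positivity : (0 : ℝ) < (1 / 2 * r) ^ 2))).and (Ioo_mem_nhdsGT hδ)).exists
  have hnorm : 1 ≤ ‖cfc (tent x ε) T‖ := by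
    simpa [tent_self] using
      norm_apply_le_norm_cfc (tent x ε) T hx (continuous_tent x ε).continuousOn
  obtain ⟨v, hv, hAv⟩ := (cfc (tent x ε) T).exists_norm_lt_lt_norm_apply_add w hr
    (c := 1 / 2) (by linarith)
  refine ⟨w + v, by simpa using hv, mem_biUnion hεδ ?_⟩
  exact hε.trans (pow_lt_pow_left₀ hAv (by positivity) two_ne_zero)

end Baire

theorem stmt_11_general {H : Type*} [NormedAddCommGroup H] [InnerProductSpace ℂ H] [CompleteSpace H]
    (T : H →L[ℂ] H) (hT : IsSelfAdjoint T)
    (μm : H → Measure ℝ) (hμm : ∀ ψ : H, IsSpectralMeasure T ψ (μm ψ))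
    (x : ℝ) (hx : x ∈ realSpectrum T) :
    ∃ η : H, dLow (μm η) x = 0 := by
  have hxℝ : x ∈ spectrum ℝ T := (spectrum.algebraMap_mem_iff ℂ).1 hx
  have hdense : Dense (⋂ n : ℕ, concentratedAt T x (1 / (n + 1))) :=
    dense_iInter_of_isOpen (fun n => isOpen_concentratedAt T x _)
      fun n => dense_concentratedAt hT hxℝ (by positivity)
  obtain ⟨η, hη⟩ := hdense.nonempty
  have := (hμm η).1
  refine ⟨η, dLow_eq_zero_of_forall_exists_rpow_le _ fun n => ?_⟩
  obtain ⟨ε, hε, hlt⟩ := mem_iUnion₂.1 (mem_iInter.1 hη n)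
  exact ⟨ε, hε, hlt.le.trans ((hμm η).norm_cfc_tent_apply_sq_le x hε.1)⟩

/-- For every `x ∈ σ(T)` there exists `η ∈ H` with `d⁻_{μ_η}(x) = 0`. -/
theorem stmt_11 {H : Type*} [NormedAddCommGroup H] [InnerProductSpace ℂ H] [CompleteSpace H]
    [TopologicalSpace.SeparableSpace H] (hinf : ¬ FiniteDimensional ℂ H)
    (T : H →L[ℂ] H) (hT : IsSelfAdjoint T)
    (μm : H → Measure ℝ) (hμm : ∀ ψ : H, IsSpectralMeasure T ψ (μm ψ))
    (x : ℝ) (hx : x ∈ realSpectrum T) :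
    ∃ η : H, dLow (μm η) x = 0 :=
  stmt_11_general T hT μm hμm x hx
end
end

section
/- Let T be a bounded self-adjoint operator on a separable infinite-dimensional complex Hilbert space H such that ⟨ψ, Tψ⟩ ≤ 0 for all ψ ∈ H and 0 ∈ σ(T), and let α : (0,∞) → (0,∞) be a function with α(t) → ∞ as t → ∞. Then there exist η ∈ H and a sequence t_j → ∞ such that, for all sufficiently large j, μ_η^T(B(0; 1/t_j)) ≥ 1/α(t_j). -/
/-!
If some spectral measure `μ_ψ` has an atom at `0`, then `η = ψ` works, because
`μ_ψ(B(0;ε)) ≥ μ_ψ{0} > 0` for every `ε`.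

Otherwise `μ_ψ(B(0;ε)) → 0` as `ε → 0` for every `ψ`. Since `0 ∈ σ(T)`, every ball `B(0;δ)`
carries the whole spectral measure of some unit vector (normalise `f(T)φ` for a bump `f`
supported in `B(0;δ/2)` with `f(0) = 1`). Take `η = ∑ 4^{-k} ψ_k` with `μ_{ψ_k}` living in
`B(0;δ_k/2)`, the radii `δ_k` decreasing so fast that the head `∑_{k<j} 4^{-k} ψ_k` has spectral
mass at most `(4^{-j}/6)²` in `B(0;δ_j)`. A bump `g_j` equal to `1` on `B(0;δ_j/2)` and
vanishing off `B(0;δ_j)` fixes the tail, of norm at least `(2/3) 4^{-j}`, and shrinks the head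
to norm at most `4^{-j}/6`, so `μ_η(B(0;δ_j)) ≥ ‖g_j(T)η‖² ≥ 16^{-j}/4`. It remains to take
`t_j ≥ j` with `α(t_j) ≥ 4·16^j` and `δ_j ≤ 1/t_j`.
-/

open MeasureTheory Filter Set Metric
open scoped ENNReal Topology Classical

noncomputable section

namespace IsSpectralMeasure

variable {H : Type*} [NormedAddCommGroup H] [InnerProductSpace ℂ H] [CompleteSpace H]
  {T : H →L[ℂ] H} {ψ : H} {μ : Measure ℝ} {g : ℝ → ℝ}

lemma isFiniteMeasure (hμ : IsSpectralMeasure T ψ μ) : IsFiniteMeasure μ := hμ.1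

lemma integrable (hμ : IsSpectralMeasure T ψ μ) (hg : Continuous g) : Integrable g μ := by
  have := hμ.isFiniteMeasure
  have hK : IsCompact (realSpectrum T) :=
    Complex.isometry_ofReal.isClosedEmbedding.isCompact_preimage (spectrum.isCompact T)
  obtain ⟨C, hC⟩ := hK.exists_bound_of_continuousOn hg.continuousOn
  refine (integrable_const C).mono' hg.aestronglyMeasurable ?_
  rw [ae_iff]
  exact measure_mono_null (fun x hx hxK => hx (hC x hxK)) hμ.2.1

lemma integral_sq_s14 (hμ : IsSpectralMeasure T ψ μ) (hg : Continuous g) :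
    ∫ x, g x ^ 2 ∂μ = ‖cfc g T ψ‖ ^ 2 := by
  have h := hμ.2.2 ⟨fun x => g x * g x, by fun_prop⟩
  simp only [ContinuousMap.coe_mk] at h
  rw [cfc_mul g g T, mul_apply_eq_comp, ← ContinuousLinearMap.adjoint_inner_left,
    (cfc_predicate g T).adjoint_eq] at h
  simp only [sq, h]
  exact inner_self_eq_norm_mul_norm (𝕜 := ℂ) _

lemma cfc_apply_eq_zero_iff (hμ : IsSpectralMeasure T ψ μ) (hg : Continuous g) :
    cfc g T ψ = 0 ↔ g =ᵐ[μ] 0 := by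
  rw [← norm_eq_zero, ← sq_eq_zero_iff, ← hμ.integral_sq_s14 hg,
    integral_eq_zero_iff_of_nonneg (fun x => sq_nonneg (g x)) (hμ.integrable (hg.pow 2))]
  exact eventually_congr (.of_forall fun x => by simp)

lemma cfc_apply_eq_self (hT : IsSelfAdjoint T) (hμ : IsSpectralMeasure T ψ μ)
    (hg : Continuous g) (hg1 : ∀ᵐ x ∂μ, g x = 1) : cfc g T ψ = ψ := by
  have h := (hμ.cfc_apply_eq_zero_iff (g := fun x => 1 - g x) (by fun_prop)).2
    (hg1.mono fun x hx => by simp [hx])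
  rwa [cfc_sub (fun _ => 1) g T, cfc_const_one ℝ T, sub_apply,
    one_apply_eq_self, sub_eq_zero, eq_comm] at h

lemma norm_cfc_apply_sq_le (hμ : IsSpectralMeasure T ψ μ) (hg : Continuous g)
    (hg1 : ∀ x, |g x| ≤ 1) {s : Set ℝ} (hs : MeasurableSet s) (hgs : ∀ x ∉ s, g x = 0) :
    ‖cfc g T ψ‖ ^ 2 ≤ μ.real s := by
  have := hμ.isFiniteMeasure
  rw [← hμ.integral_sq_s14 hg, ← integral_indicator_one hs]
  refine integral_mono (hμ.integrable (hg.pow 2)) ((integrable_const 1).indicator hs) fun x => ?_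
  by_cases hx : x ∈ s
  · simpa [hx] using (sq_le_one_iff_abs_le_one _).2 (hg1 x)
  · simp [hx, hgs x hx]

end IsSpectralMeasure

def ballBump {r : ℝ} (hr : 0 < r) : ContDiffBump (0 : ℝ) := ⟨r / 2, r, half_pos hr, half_lt_self hr⟩

lemma ballBump_eq_one {r x : ℝ} (hr : 0 < r) (hx : |x| ≤ r / 2) : ballBump hr x = 1 :=
  (ballBump hr).one_of_mem_closedBall (by simpa [ballBump, Real.dist_eq] using hx)

lemma ballBump_eq_zero {r x : ℝ} (hr : 0 < r) (hx : r ≤ |x|) : ballBump hr x = 0 :=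
  (ballBump hr).zero_of_le_dist (by simpa [ballBump, Real.dist_eq] using hx)

lemma abs_ballBump_le_one {r : ℝ} (hr : 0 < r) (x : ℝ) : |ballBump hr x| ≤ 1 := by
  rw [abs_of_nonneg (ContDiffBump.nonneg _)]
  exact ContDiffBump.le_one _

lemma one_sub_le_norm_tsum_geometric_smul {E : Type*} [NormedAddCommGroup E] [NormedSpace ℝ E]
    [CompleteSpace E] {q : ℝ} (hq0 : 0 ≤ q) (hq1 : q < 1) {v : ℕ → E} (hv : ∀ k, ‖v k‖ = 1) :
    1 - q / (1 - q) ≤ ‖∑' k, q ^ k • v k‖ := by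
  have hnorm : ∀ k, ‖q ^ k • v k‖ = q ^ k := fun k => by
    rw [norm_smul, hv, mul_one, norm_pow, Real.norm_of_nonneg hq0]
  have hsum : Summable fun k => ‖q ^ k • v k‖ := by
    simp only [hnorm]; exact summable_geometric_of_lt_one hq0 hq1
  have htail : ‖∑' k, q ^ (k + 1) • v (k + 1)‖ ≤ q / (1 - q) := by
    calc _ ≤ ∑' k, ‖q ^ (k + 1) • v (k + 1)‖ :=
          norm_tsum_le_tsum_norm ((summable_nat_add_iff (f := fun k => ‖q ^ k • v k‖) 1).2 hsum)
      _ = q / (1 - q) := by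
          simp only [hnorm]
          simp only [pow_succ', tsum_mul_left, tsum_geometric_of_lt_one hq0 hq1, div_eq_mul_inv]
  rw [hsum.of_norm.tsum_eq_zero_add, pow_zero, one_smul]
  linarith [norm_sub_le_norm_add (v 0) (∑' k, q ^ (k + 1) • v (k + 1)), hv 0]

lemma exists_antitone_radii {M : Type*} [AddCommMonoid M] (ν : M → Measure ℝ)
    (hν : ∀ U : M, ∀ ε : ℝ≥0∞, 0 < ε → ∃ δ > 0, ν U (ball 0 δ) ≤ ε)
    (v : ℕ → ℝ → M) {r : ℕ → ℝ} (hr : ∀ j, 0 < r j) {ε : ℕ → ℝ≥0∞} (hε : ∀ j, 0 < ε j) :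
    ∃ δ : ℕ → ℝ, (∀ j, 0 < δ j) ∧ Antitone δ ∧ (∀ j, δ j ≤ r j) ∧
      ∀ j, ν (∑ k ∈ Finset.range j, v k (δ k)) (ball 0 (δ j)) ≤ ε j := by
  choose! D hDpos hD using hν
  set rad : ℕ → M → ℝ := fun j U => min (r j) (D U (ε j))
  have hrad_pos : ∀ j U, 0 < rad j U := fun j U => lt_min (hr j) (hDpos U _ (hε j))
  -- the state at step `n` is the radius `δ n` together with the partial sum up to `n`
  let s : ℕ → ℝ × M := fun n => Nat.rec (rad 0 0, 0)
    (fun n p => (min p.1 (rad (n + 1) (p.2 + v n p.1)), p.2 + v n p.1)) n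
  have hsum : ∀ n, (s n).2 = ∑ k ∈ Finset.range n, v k (s k).1 := by
    intro n
    induction n with
    | zero => rfl
    | succ n ih => rw [Finset.sum_range_succ, ← ih]
  have hrad : ∀ n, (s n).1 ≤ rad n (s n).2 := by
    rintro (_ | n)
    · exact le_rfl
    · exact min_le_right _ _
  have hpos : ∀ n, 0 < (s n).1 := by
    intro n
    induction n with
    | zero => exact hrad_pos 0 0
    | succ n ih => exact lt_min ih (hrad_pos _ _)
  refine ⟨fun n => (s n).1, hpos, antitone_nat_of_succ_le fun n => min_le_left _ _,
    fun n => (hrad n).trans (min_le_left _ _), fun n => ?_⟩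
  rw [← hsum]
  exact (measure_mono (ball_subset_ball ((hrad n).trans (min_le_right _ _)))).trans
    (hD _ _ (hε n))

lemma exists_measure_ball_le_of_measure_singleton_eq_zero {X : Type*} [MetricSpace X]
    [MeasurableSpace X] [OpensMeasurableSpace X] {μ : Measure X} [IsFiniteMeasure μ] {x : X}
    (h : μ {x} = 0) {ε : ℝ≥0∞} (hε : 0 < ε) : ∃ δ > 0, μ (ball x δ) ≤ ε := by
  have hlim : Tendsto (fun r => μ (cthickening r {x})) (𝓝 0) (𝓝 (μ {x})) :=
    tendsto_measure_cthickening_of_isClosed ⟨1, one_pos, measure_ne_top _ _⟩ isClosed_singleton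
  rw [h] at hlim
  obtain ⟨δ, hδ, hδpos⟩ :=
    ((hlim.mono_left (nhdsWithin_le_nhds (s := Ioi 0))).eventually (gt_mem_nhds hε)).and
      self_mem_nhdsWithin |>.exists
  refine ⟨δ, hδpos, (measure_mono ?_).trans hδ.le⟩
  rw [cthickening_singleton _ hδpos.le]
  exact ball_subset_closedBall

section SpectralConstruction

variable {H : Type*} [NormedAddCommGroup H] [InnerProductSpace ℂ H] [CompleteSpace H]
  {T : H →L[ℂ] H} {μm : H → Measure ℝ}

lemma exists_norm_eq_one_measure_compl_ball_eq_zero (h0 : (0 : ℝ) ∈ spectrum ℝ T)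
    (hT : IsSelfAdjoint T) (hμm : ∀ ψ, IsSpectralMeasure T ψ (μm ψ)) {d : ℝ} (hd : 0 < d) :
    ∃ ψ : H, ‖ψ‖ = 1 ∧ μm ψ (ball 0 d)ᶜ = 0 := by
  set f : ℝ → ℝ := ⇑(ballBump (half_pos hd))
  set h : ℝ → ℝ := fun x => 1 - ballBump hd x
  have hfc : Continuous f := ContDiffBump.continuous _
  have hhc : Continuous h := continuous_const.sub (ContDiffBump.continuous _)
  have hhf : (fun x => h x * f x) = 0 := by
    ext x
    rcases le_total |x| (d / 2) with hx | hx
    · simp [h, ballBump_eq_one hd hx]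
    · simp [f, ballBump_eq_zero (half_pos hd) hx]
  have hf0 : cfc f T ≠ 0 := by
    intro hzero
    have := norm_apply_le_norm_cfc f T h0 hfc.continuousOn
    norm_num [hzero, f, ballBump_eq_one (half_pos hd) (x := 0) (by rw [abs_zero]; positivity)]
      at this
  obtain ⟨φ, hφ⟩ : ∃ φ, cfc f T φ ≠ 0 := by
    by_contra! hφ
    exact hf0 (ContinuousLinearMap.ext hφ)
  refine ⟨(‖cfc f T φ‖⁻¹ : ℂ) • cfc f T φ, norm_smul_inv_norm hφ, ?_⟩
  have hψ : cfc h T ((‖cfc f T φ‖⁻¹ : ℂ) • cfc f T φ) = 0 := by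
    rw [map_smul, ← mul_apply_eq_comp, ← cfc_mul h f T hhc.continuousOn hfc.continuousOn, hhf,
      cfc_zero, zero_apply, smul_zero]
  have hae := ((hμm _).cfc_apply_eq_zero_iff hhc).1 hψ
  rw [EventuallyEq, ae_iff] at hae
  refine measure_mono_null (fun x hx => ?_) hae
  simp [h, ballBump_eq_zero hd (by simpa using hx)]

lemma measure_ball_tsum_geometric_ge (hT : IsSelfAdjoint T)
    (hμm : ∀ ψ, IsSpectralMeasure T ψ (μm ψ)) {δ : ℕ → ℝ} (hδ : ∀ k, 0 < δ k)
    (hδanti : Antitone δ) {ψ : ℕ → H} (hψ1 : ∀ k, ‖ψ k‖ = 1)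
    (hψ : ∀ k, μm (ψ k) (ball 0 (δ k / 2))ᶜ = 0) {j : ℕ}
    (hU : μm (∑ k ∈ Finset.range j, (1 / 4 : ℝ) ^ k • ψ k) (ball 0 (δ j)) ≤
      ENNReal.ofReal (((1 / 4) ^ j / 6) ^ 2)) :
    ENNReal.ofReal (((1 / 4) ^ j / 2) ^ 2) ≤
      μm (∑' k, (1 / 4 : ℝ) ^ k • ψ k) (ball 0 (δ j)) := by
  set q : ℝ := 1 / 4
  set g : ℝ → ℝ := ⇑(ballBump (hδ j))
  have hg : Continuous g := ContDiffBump.continuous _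
  have hgs : ∀ x ∉ ball 0 (δ j), g x = 0 := fun x hx =>
    ballBump_eq_zero _ (by simpa using hx)
  set U := ∑ k ∈ Finset.range j, q ^ k • ψ k
  set W := ∑' i, q ^ i • ψ (i + j)
  have hsum : ∀ l, Summable fun k => q ^ k • ψ (k + l) := fun l =>
    (summable_geometric_of_lt_one (r := q) (by norm_num [q]) (by norm_num [q])).of_norm_bounded
      fun k => by rw [norm_smul, hψ1, mul_one, norm_pow, Real.norm_of_nonneg (by norm_num)]
  have hsplit : ∑' k, q ^ k • ψ k = U + q ^ j • W := by
    have h := (hsum 0).sum_add_tsum_nat_add j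
    simp only [add_zero] at h
    rw [← h, ← tsum_const_smul'']
    simp only [smul_smul, ← pow_add, add_comm j]
    rfl
  have hAW : cfc g T W = W := by
    rw [ContinuousLinearMap.map_tsum _ (hsum j)]
    refine tsum_congr fun i => ?_
    rw [ContinuousLinearMap.map_smul_of_tower]
    congr 1
    refine (hμm _).cfc_apply_eq_self hT hg ?_
    filter_upwards [mem_ae_iff.2 (hψ (i + j))] with x hx
    refine ballBump_eq_one _ ?_
    rw [mem_ball, dist_zero_right, Real.norm_eq_abs] at hx
    linarith [hδanti (Nat.le_add_left j i)]
  have hAU : ‖cfc g T U‖ ≤ q ^ j / 6 := by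
    have h1 := (hμm U).norm_cfc_apply_sq_le hg (abs_ballBump_le_one _) measurableSet_ball hgs
    have h2 := ENNReal.toReal_le_of_le_ofReal (by positivity) hU
    exact (pow_le_pow_iff_left₀ (norm_nonneg _) (by positivity) two_ne_zero).1 (h1.trans h2)
  have hW : 2 / 3 ≤ ‖W‖ := by
    have := one_sub_le_norm_tsum_geometric_smul (q := q) (by norm_num) (by norm_num)
      (fun i => hψ1 (i + j))
    norm_num [q] at this ⊢
    exact this
  have hAη : q ^ j / 2 ≤ ‖cfc g T (∑' k, q ^ k • ψ k)‖ := by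
    rw [hsplit, map_add, ContinuousLinearMap.map_smul_of_tower, hAW]
    have := norm_sub_le_norm_add (q ^ j • W) (cfc g T U)
    rw [norm_smul, Real.norm_of_nonneg (by positivity), add_comm] at this
    nlinarith [pow_nonneg (show (0 : ℝ) ≤ q by norm_num) j]
  exact ENNReal.ofReal_le_of_le_toReal ((pow_le_pow_left₀ (by positivity) hAη 2).trans
    ((hμm _).norm_cfc_apply_sq_le hg (abs_ballBump_le_one _) measurableSet_ball hgs))

lemma exists_forall_measure_ball_ge_of_measure_singleton_eq_zero (h0 : (0 : ℝ) ∈ spectrum ℝ T)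
    (hT : IsSelfAdjoint T) (hμm : ∀ ψ, IsSpectralMeasure T ψ (μm ψ))
    (hatom : ∀ ψ, μm ψ {0} = 0) {r : ℕ → ℝ} (hr : ∀ j, 0 < r j) :
    ∃ η : H, ∀ j, ENNReal.ofReal (((1 / 4) ^ j / 2) ^ 2) ≤ μm η (ball 0 (r j)) := by
  choose! Ψ hΨ1 hΨ using fun d (hd : 0 < d) =>
    exists_norm_eq_one_measure_compl_ball_eq_zero h0 hT hμm hd
  obtain ⟨δ, hδ, hδanti, hδr, hδU⟩ := exists_antitone_radii μm
    (fun U ε hε => have := (hμm U).isFiniteMeasure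
      exists_measure_ball_le_of_measure_singleton_eq_zero (hatom U) hε)
    (fun k d => (1 / 4 : ℝ) ^ k • Ψ (d / 2)) hr
    (ε := fun j => ENNReal.ofReal (((1 / 4) ^ j / 6) ^ 2))
    (fun j => ENNReal.ofReal_pos.2 (by positivity))
  exact ⟨∑' k, (1 / 4 : ℝ) ^ k • Ψ (δ k / 2), fun j =>
    (measure_ball_tsum_geometric_ge hT hμm hδ hδanti (fun k => hΨ1 _ (half_pos (hδ k)))
      (fun k => hΨ _ (half_pos (hδ k))) (hδU j)).trans (measure_mono (ball_subset_ball (hδr j)))⟩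

lemma exists_forall_measure_ball_ge (h0 : (0 : ℝ) ∈ spectrum ℝ T) (hT : IsSelfAdjoint T)
    (hμm : ∀ ψ, IsSpectralMeasure T ψ (μm ψ)) :
    ∃ C > 0, ∀ r : ℕ → ℝ, (∀ j, 0 < r j) →
      ∃ η : H, ∀ j, ENNReal.ofReal (C * ((1 / 4) ^ j) ^ 2) ≤ μm η (ball 0 (r j)) := by
  by_cases hatom : ∀ ψ, μm ψ {0} = 0
  · refine ⟨1 / 4, by norm_num, fun r hr => ?_⟩
    obtain ⟨η, hη⟩ :=
      exists_forall_measure_ball_ge_of_measure_singleton_eq_zero h0 hT hμm hatom hr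
    exact ⟨η, fun j => by convert hη j using 2; ring⟩
  · obtain ⟨ψ, hψ⟩ := not_forall.1 hatom
    have := (hμm ψ).isFiniteMeasure
    refine ⟨(μm ψ {0}).toReal, ENNReal.toReal_pos hψ (measure_ne_top _ _),
      fun r hr => ⟨ψ, fun j => ?_⟩⟩
    calc ENNReal.ofReal ((μm ψ {0}).toReal * ((1 / 4) ^ j) ^ 2)
        ≤ ENNReal.ofReal (μm ψ {0}).toReal :=
          ENNReal.ofReal_le_ofReal (mul_le_of_le_one_right ENNReal.toReal_nonneg
            (pow_le_one₀ (by positivity) (pow_le_one₀ (by norm_num) (by norm_num))))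
      _ = μm ψ {0} := ENNReal.ofReal_toReal (measure_ne_top _ _)
      _ ≤ μm ψ (ball 0 (r j)) := measure_mono (singleton_subset_iff.2 (mem_ball_self (hr j)))

end SpectralConstruction

theorem stmt_14_general {H : Type*} [NormedAddCommGroup H] [InnerProductSpace ℂ H] [CompleteSpace H]
    (T : H →L[ℂ] H) (hT : IsSelfAdjoint T)
    (h0 : (0 : ℂ) ∈ spectrum ℂ T)
    (μm : H → Measure ℝ) (hμm : ∀ ψ : H, IsSpectralMeasure T ψ (μm ψ))
    (a : ℝ → ℝ)
    (ha : Filter.Tendsto a Filter.atTop Filter.atTop) :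
    ∃ (η : H) (tj : ℕ → ℝ), Filter.Tendsto tj Filter.atTop Filter.atTop ∧
      ∀ᶠ j in Filter.atTop,
        ENNReal.ofReal (1 / a (tj j)) ≤ μm η (Metric.ball 0 (1 / tj j)) := by
  obtain ⟨C, hC, hball⟩ :=
    exists_forall_measure_ball_ge (by rwa [spectrum.zero_mem_iff] at h0 ⊢) hT hμm
  have ht : ∀ j : ℕ, ∃ t : ℝ, j ≤ t ∧ 0 < t ∧ 1 / (C * ((1 / 4) ^ j) ^ 2) ≤ a t := fun j =>
    ((eventually_ge_atTop _).and ((eventually_gt_atTop 0).and (ha.eventually_ge_atTop _))).exists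
  choose t htj htpos hta using ht
  obtain ⟨η, hη⟩ := hball (fun j => 1 / t j) fun j => one_div_pos.2 (htpos j)
  refine ⟨η, t, tendsto_atTop_mono htj tendsto_natCast_atTop_atTop,
    .of_forall fun j => (ENNReal.ofReal_le_ofReal ?_).trans (hη j)⟩
  simpa using one_div_le_one_div_of_le (by positivity) (hta j)

/-- For a negative bounded self-adjoint operator with `0 ∈ σ(T)` and
`α(t) → ∞`, there are `η ∈ H` and `t_j → ∞` with `μ_η(B(0;1/t_j)) ≥ 1/α(t_j)` for large `j`. -/
theorem stmt_14 {H : Type*} [NormedAddCommGroup H] [InnerProductSpace ℂ H] [CompleteSpace H]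
    [TopologicalSpace.SeparableSpace H] (hinf : ¬ FiniteDimensional ℂ H)
    (T : H →L[ℂ] H) (hT : IsSelfAdjoint T)
    (hneg : ∀ ψ : H, (inner ℂ ψ (T ψ) : ℂ).re ≤ 0)
    (h0 : (0 : ℂ) ∈ spectrum ℂ T)
    (μm : H → Measure ℝ) (hμm : ∀ ψ : H, IsSpectralMeasure T ψ (μm ψ))
    (a : ℝ → ℝ) (ha_pos : ∀ t > (0 : ℝ), 0 < a t)
    (ha : Filter.Tendsto a Filter.atTop Filter.atTop) :
    ∃ (η : H) (tj : ℕ → ℝ), Filter.Tendsto tj Filter.atTop Filter.atTop ∧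
      ∀ᶠ j in Filter.atTop,
        ENNReal.ofReal (1 / a (tj j)) ≤ μm η (Metric.ball 0 (1 / tj j)) :=
  stmt_14_general T hT h0 μm hμm a ha
end
end

section
/- Let n ≥ 5 and let f be a Schwartz function on ℝⁿ. Then the function u defined by u(x) = f(x)/‖x‖² for x ≠ 0 and u(0) = 0 belongs to L²(ℝⁿ), and ‖x‖²·u(x) = f(x) for all x ≠ 0. Consequently, the Schwartz space 𝒮(ℝⁿ) is contained in the range of the multiplication operator M₀ acting on {u ∈ L²(ℝⁿ) : ‖x‖²u ∈ L²(ℝⁿ)} by (M₀u)(x) = ‖x‖²u(x). -/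
open MeasureTheory Filter Set Metric
open scoped ENNReal Topology Classical

noncomputable section

/-!
Near the origin `|f(x)/‖x‖²| ≤ ‖f‖_∞ ‖x‖⁻²`, and in polar coordinates `∫_{‖x‖<1} ‖x‖⁻⁴ dx` is a
multiple of `∫₀¹ r^{n-5} dr`, finite exactly when `n > 4`; away from the origin `|f(x)/‖x‖²| ≤ |f(x)|`.
Since `{0}` is a null set, `‖x‖² u = f` almost everywhere.
-/

section RadialPower

variable {E : Type*} [NormedAddCommGroup E] [NormedSpace ℝ E] [FiniteDimensional ℝ E]
  [MeasurableSpace E] [BorelSpace E] [Nontrivial E] {μ : Measure E} [μ.IsAddHaarMeasure]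

theorem integrableOn_ball_norm_rpow {t : ℝ} (ht : -(Module.finrank ℝ E : ℝ) < t) (r : ℝ) :
    IntegrableOn (fun x : E => ‖x‖ ^ t) (ball 0 r) μ := by
  rcases le_or_gt r 0 with hr | hr
  · simp [ball_eq_empty.2 hr]
  rw [integrableOn_fun_norm_addHaar μ (f := fun y => y ^ t)]
  have hd : 1 ≤ Module.finrank ℝ E := Module.finrank_pos
  refine ((intervalIntegral.integrableOn_Ioo_rpow_iff (s := t + (Module.finrank ℝ E - 1 : ℕ))
    hr).2 ?_).congr_fun (fun y hy => ?_) measurableSet_Ioo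
  · push_cast [hd]
    linarith
  · simp [Real.rpow_add hy.1, Real.rpow_natCast, mul_comm]

theorem memLp_norm_rpow_neg_restrict_ball {p : ℝ≥0∞} (hp0 : p ≠ 0) (hp : p ≠ ∞) {s : ℝ}
    (hs : s * p.toReal < Module.finrank ℝ E) (r : ℝ) :
    MemLp (fun x : E => ‖x‖ ^ (-s)) p (μ.restrict (ball 0 r)) := by
  have hmeas : AEStronglyMeasurable (fun x : E => ‖x‖ ^ (-s)) (μ.restrict (ball 0 r)) :=
    (measurable_norm.pow_const _).aestronglyMeasurable
  rw [← integrable_norm_rpow_iff hmeas hp0 hp]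
  refine (integrableOn_ball_norm_rpow (t := -s * p.toReal) (by linarith) r).congr
    (ae_of_all _ fun x => ?_)
  simp only [Real.norm_eq_abs, abs_of_nonneg (Real.rpow_nonneg (norm_nonneg x) _),
    ← Real.rpow_mul (norm_nonneg x)]

/-- Hölder on the unit ball (`‖x‖^(-s) ∈ Lᵖ`, `g ∈ L^∞`) and off it (`‖x‖^(-s) ≤ 1`, `g ∈ Lᵖ`). -/
theorem MemLp.norm_rpow_neg_smul {F : Type*} [NormedAddCommGroup F] [NormedSpace ℝ F]
    {p : ℝ≥0∞} (hp0 : p ≠ 0) (hp : p ≠ ∞) {s : ℝ} (hs0 : 0 ≤ s)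
    (hs : s * p.toReal < Module.finrank ℝ E) {g : E → F} (hg : MemLp g p μ)
    (hg_top : MemLp g ∞ μ) :
    MemLp (fun x => ‖x‖ ^ (-s) • g x) p μ := by
  rw [← (ball (0 : E) 1).indicator_self_add_compl (fun x => ‖x‖ ^ (-s) • g x)]
  refine MemLp.add ?_ ?_
  · rw [memLp_indicator_iff_restrict measurableSet_ball]
    exact (hg_top.restrict _).smul (memLp_norm_rpow_neg_restrict_ball hp0 hp hs 1)
  · rw [memLp_indicator_iff_restrict measurableSet_ball.compl]
    refine (hg.restrict _).smul (p := ∞) (memLp_top_of_bound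
      (measurable_norm.pow_const _).aestronglyMeasurable 1 ?_)
    refine ae_restrict_of_forall_mem measurableSet_ball.compl fun x hx => ?_
    have hx1 : 1 ≤ ‖x‖ := by simpa using hx
    rw [Real.norm_eq_abs, abs_of_nonneg (by positivity)]
    exact Real.rpow_le_one_of_one_le_of_nonpos hx1 (by linarith)

end RadialPower

section DivNormSq

variable {E : Type*} [NormedAddCommGroup E] [DecidableEq E]

def divNormSq (f : E → ℂ) (x : E) : ℂ :=
  if x = 0 then 0 else f x / ((‖x‖ ^ 2 : ℝ) : ℂ)

theorem norm_sq_mul_divNormSq (f : E → ℂ) {x : E} (hx : x ≠ 0) :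
    ((‖x‖ ^ 2 : ℝ) : ℂ) * divNormSq f x = f x := by
  rw [divNormSq, if_neg hx, mul_div_cancel₀]
  exact_mod_cast pow_ne_zero 2 (norm_ne_zero_iff.2 hx)

theorem norm_sq_mul_divNormSq_ae_eq [MeasurableSpace E] {μ : Measure E} [NullSingletonClass μ]
    (f : E → ℂ) : (fun x => ((‖x‖ ^ 2 : ℝ) : ℂ) * divNormSq f x) =ᵐ[μ] f := by
  filter_upwards [compl_mem_ae_iff.2 (measure_singleton (0 : E))] with x hx
  exact norm_sq_mul_divNormSq f hx

-- At `x = 0` both sides vanish because `(0 : ℝ) ^ (-2 : ℝ) = 0`.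
theorem divNormSq_eq_rpow_smul (f : E → ℂ) :
    divNormSq f = fun x => ‖x‖ ^ (-2 : ℝ) • f x := by
  ext x
  rcases eq_or_ne x 0 with rfl | hx
  · simp [divNormSq]
  · simp [divNormSq, hx, Real.rpow_neg (norm_nonneg x), div_eq_inv_mul]

theorem SchwartzMap.memLp_two_divNormSq [NormedSpace ℝ E] [FiniteDimensional ℝ E]
    [MeasurableSpace E] [BorelSpace E] {μ : Measure E} [μ.IsAddHaarMeasure]
    (hE : 4 < Module.finrank ℝ E) (f : SchwartzMap E ℂ) :
    MemLp (divNormSq f) 2 μ := by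
  have : Nontrivial E := Module.nontrivial_of_finrank_pos (R := ℝ) (by omega)
  rw [divNormSq_eq_rpow_smul]
  exact MemLp.norm_rpow_neg_smul two_ne_zero ENNReal.ofNat_ne_top zero_le_two
    (by norm_num; exact_mod_cast hE) (f.memLp 2 μ) (f.memLp_top μ)

end DivNormSq

/-- For `n ≥ 5` and a Schwartz function `f` on `ℝⁿ`, the function
`u(x) = f(x)/‖x‖²` (with `u(0) = 0`) is in `L²`, satisfies `‖x‖² u(x) = f(x)` for `x ≠ 0`;
consequently every Schwartz function is in the range of the multiplication operator `M₀`. -/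
theorem stmt_15 (n : ℕ) (hn : 5 ≤ n) (f : SchwartzMap (EuclideanSpace ℝ (Fin n)) ℂ) :
    MemLp (fun x : EuclideanSpace ℝ (Fin n) =>
        if x = 0 then 0 else f x / ((‖x‖ ^ 2 : ℝ) : ℂ)) 2 volume ∧
      (∀ x : EuclideanSpace ℝ (Fin n), x ≠ 0 →
        ((‖x‖ ^ 2 : ℝ) : ℂ) *
          (if x = 0 then 0 else f x / ((‖x‖ ^ 2 : ℝ) : ℂ)) = f x) ∧
      (∀ g : SchwartzMap (EuclideanSpace ℝ (Fin n)) ℂ,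
        ∃ u : EuclideanSpace ℝ (Fin n) → ℂ, MemLp u 2 volume ∧
          MemLp (fun x => ((‖x‖ ^ 2 : ℝ) : ℂ) * u x) 2 volume ∧
          (fun x => ((‖x‖ ^ 2 : ℝ) : ℂ) * u x) =ᵐ[volume] (g : _ → ℂ)) := by
  have hdim : 4 < Module.finrank ℝ (EuclideanSpace ℝ (Fin n)) := by
    simp only [finrank_euclideanSpace, Fintype.card_fin]; omega
  have : Nontrivial (EuclideanSpace ℝ (Fin n)) :=
    Module.nontrivial_of_finrank_pos (R := ℝ) (by omega)
  refine ⟨f.memLp_two_divNormSq hdim, fun x hx => norm_sq_mul_divNormSq f hx, fun g =>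
    ⟨divNormSq g, g.memLp_two_divNormSq hdim, ?_, norm_sq_mul_divNormSq_ae_eq g⟩⟩
  exact (g.memLp 2).ae_eq (norm_sq_mul_divNormSq_ae_eq g).symm
end
end
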